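/- arXiv:1806.08885 — 5 statements merged into one kernel-verified Lean document; each statement's English description precedes it below -/
import Mathlib

section
/- Let r ≥ 2 and n ≥ 1 be integers and let G = (V, E) be a graph on exactly 7rn vertices such that: (a) |E| ≥ 500 (log r) r² n, and (b) for every two disjoint sets S, T ⊆ V with |S| = |T| = n, the number of edges of G having both endpoints in S ∪ T and at least one endpoint in S is at most 70 (log r) n. Then every colouring of the edges of G with r colours yields a monochromatic copy of the path P_n on n vertices; that is, G → (P_n)_r. -/
open SimpleGraph

/-- `G → (F)_r` : every colouring of the edges of `G` with `r` colours yields a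
monochromatic copy of `F`, i.e. an injective map preserving adjacency all of whose
edges receive the same colour. -/
def Arrows {V W : Type*} (G : SimpleGraph V) (F : SimpleGraph W) (r : ℕ) : Prop :=
  ∀ c : Sym2 V → Fin r, ∃ (k : Fin r) (f : W → V), Function.Injective f ∧
    ∀ a b, F.Adj a b → G.Adj (f a) (f b) ∧ c s(f a, f b) = k

/-- The set of edges of `G` with both endpoints in `S ∪ T` and at least one
endpoint in `S`. -/
def crossEdges {V : Type*} (G : SimpleGraph V) (S T : Set V) : Set (Sym2 V) :=
  {e ∈ G.edgeSet | (∀ v ∈ e, v ∈ S ∪ T) ∧ ∃ v ∈ e, v ∈ S}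


open SimpleGraph

/-- `u` has not been popped among the first `j+1` entries of the pop record `L`. -/
def notPopped {V : Type*} (L : List (V × Finset V)) (u : V) (j : ℕ) : Prop :=
  ∀ i : ℕ, i ≤ j → ∀ (hi : i < L.length), (L[i]'hi).1 ≠ u

lemma dfs_aux {V : Type*} [DecidableEq V] (H : SimpleGraph V) (n : ℕ) :
    ∀ (m : ℕ) (stack : List V) (todo : Finset V),
    2 * todo.card + stack.length ≤ m →
    stack.Nodup → stack.Chain' H.Adj →
    (∀ v ∈ stack, v ∉ todo) →
    (∀ u v : V, H.Adj u v → u ∈ todo → v ∈ todo ∨ v ∈ stack) →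
    (∃ l : List V, l.Nodup ∧ l.Chain' H.Adj ∧ l.length = n) ∨
    ∃ L : List (V × Finset V),
      (L.map Prod.fst).Nodup ∧
      (∀ x : V, x ∈ L.map Prod.fst ↔ x ∈ todo ∨ x ∈ stack) ∧
      (∀ p ∈ L, p.2.card ≤ n) ∧
      (∀ u ∈ stack, ∀ (j : ℕ) (hj : j < L.length), notPopped L u j → u ∈ (L[j]'hj).2) ∧
      (∀ u w : V, H.Adj u w → (u ∈ todo ∨ u ∈ stack) →
        ∀ (s : ℕ) (hs : s < L.length), (L[s]'hs).1 = w →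
        ∀ (j : ℕ) (hj : j < L.length), s ≤ j → notPopped L u j → u ∈ (L[j]'hj).2) := by
  intro m
  induction m using Nat.strong_induction_on with
  | _ m IH =>
  intro stack todo hm hnd hch hdis hsep
  match stack with
  | [] =>
    by_cases h0 : todo = ∅
    · subst h0
      refine Or.inr ⟨[], by simp, by simp, by simp, by simp, ?_⟩
      intro u w _ _ s hs
      simp at hs
    · obtain ⟨w, hw⟩ := Finset.nonempty_iff_ne_empty.2 h0
      have hcard : (todo.erase w).card = todo.card - 1 := Finset.card_erase_of_mem hw
      have hcpos : 1 ≤ todo.card := Finset.card_pos.2 ⟨w, hw⟩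
      have hmeas : 2 * (todo.erase w).card + ([w] : List V).length < m := by
        simp only [List.length_singleton, hcard]
        simp only [List.length_nil] at hm
        omega
      have := IH _ hmeas [w] (todo.erase w) le_rfl (by simp) (by simp [List.Chain'])
        (by intro v hv; simp at hv; subst hv; exact Finset.notMem_erase _ _)
        (by
          intro u v hadj hu
          rcases hsep u v hadj (Finset.mem_of_mem_erase hu) with h | h
          · by_cases hvw : v = w
            · exact Or.inr (by simp [hvw])
            · exact Or.inl (Finset.mem_erase.2 ⟨hvw, h⟩)
          · simp at h)
      rcases this with hL | ⟨L, h1, h2, h3, h4, h5⟩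
      · exact Or.inl hL
      · refine Or.inr ⟨L, h1, ?_, h3, by simp, ?_⟩
        · intro x
          rw [h2 x]
          constructor
          · rintro (hx | hx)
            · exact Or.inl (Finset.mem_of_mem_erase hx)
            · simp at hx; subst hx; exact Or.inl hw
          · rintro (hx | hx)
            · by_cases hxw : x = w
              · exact Or.inr (by simp [hxw])
              · exact Or.inl (Finset.mem_erase.2 ⟨hxw, hx⟩)
            · simp at hx
        · intro u w' hadj hu s hs heq j hj hsj hnp
          have hu' : u ∈ todo.erase w ∨ u ∈ [w] := by
            rcases hu with hu | hu
            · by_cases huw : u = w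
              · exact Or.inr (by simp [huw])
              · exact Or.inl (Finset.mem_erase.2 ⟨huw, hu⟩)
            · simp at hu
          exact h5 u w' hadj hu' s hs heq j hj hsj hnp
  | v :: rest =>
    by_cases hnb : ∃ w ∈ todo, H.Adj v w
    · -- push
      obtain ⟨w, hwt, hadj⟩ := hnb
      have hwstack : w ∉ v :: rest := fun hmem => hdis w hmem hwt
      have hcard : (todo.erase w).card = todo.card - 1 := Finset.card_erase_of_mem hwt
      have hcpos : 1 ≤ todo.card := Finset.card_pos.2 ⟨w, hwt⟩
      have hmeas : 2 * (todo.erase w).card + (w :: v :: rest).length < m := by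
        simp only [List.length_cons, hcard]
        simp only [List.length_cons] at hm
        omega
      have := IH _ hmeas (w :: v :: rest) (todo.erase w) le_rfl
        (List.nodup_cons.2 ⟨hwstack, hnd⟩)
        (List.isChain_cons_cons.2 ⟨hadj.symm, hch⟩)
        (by
          intro x hx
          rcases List.mem_cons.1 hx with hx | hx
          · subst hx; exact Finset.notMem_erase _ _
          · exact fun hmem => hdis x hx (Finset.mem_of_mem_erase hmem))
        (by
          intro u x hadj' hu
          rcases hsep u x hadj' (Finset.mem_of_mem_erase hu) with h | h
          · by_cases hxw : x = w
            · exact Or.inr (by simp [hxw])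
            · exact Or.inl (Finset.mem_erase.2 ⟨hxw, h⟩)
          · exact Or.inr (List.mem_cons_of_mem _ h))
      rcases this with hL | ⟨L, h1, h2, h3, h4, h5⟩
      · exact Or.inl hL
      · refine Or.inr ⟨L, h1, ?_, h3, ?_, ?_⟩
        · intro x
          rw [h2 x]
          constructor
          · rintro (hx | hx)
            · exact Or.inl (Finset.mem_of_mem_erase hx)
            · rcases List.mem_cons.1 hx with hx | hx
              · subst hx; exact Or.inl hwt
              · exact Or.inr hx
          · rintro (hx | hx)
            · by_cases hxw : x = w
              · exact Or.inr (by simp [hxw])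
              · exact Or.inl (Finset.mem_erase.2 ⟨hxw, hx⟩)
            · exact Or.inr (List.mem_cons_of_mem _ hx)
        · intro u hu j hj hnp
          exact h4 u (List.mem_cons_of_mem _ hu) j hj hnp
        · intro u w' hadj' hu s hs heq j hj hsj hnp
          have hu' : u ∈ todo.erase w ∨ u ∈ w :: v :: rest := by
            rcases hu with hu | hu
            · by_cases huw : u = w
              · exact Or.inr (by simp [huw])
              · exact Or.inl (Finset.mem_erase.2 ⟨huw, hu⟩)
            · exact Or.inr (List.mem_cons_of_mem _ hu)
          exact h5 u w' hadj' hu' s hs heq j hj hsj hnp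
    · -- pop
      by_cases hlen : n ≤ (v :: rest).length
      · refine Or.inl ⟨(v :: rest).take n, ?_, ?_, ?_⟩
        · exact List.Nodup.sublist (List.take_sublist _ _) hnd
        · exact List.IsChain.take hch _
        · simp only [List.length_cons] at hlen; simp only [List.length_take, List.length_cons]; omega
      · push_neg at hlen
        have hmeas : 2 * todo.card + rest.length < m := by
          simp only [List.length_cons] at hm; omega
        have hvrest : v ∉ rest := (List.nodup_cons.1 hnd).1
        have hvtodo : v ∉ todo := hdis v List.mem_cons_self
        have := IH _ hmeas rest todo le_rfl
          (List.nodup_cons.1 hnd).2 hch.tail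
          (fun x hx => hdis x (List.mem_cons_of_mem _ hx))
          (by
            intro u x hadj' hu
            rcases hsep u x hadj' hu with h | h
            · exact Or.inl h
            · rcases List.mem_cons.1 h with h | h
              · exact absurd ⟨u, hu, (h ▸ hadj').symm⟩ hnb
              · exact Or.inr h)
        rcases this with hL | ⟨L', h1, h2, h3, h4, h5⟩
        · exact Or.inl hL
        · have hvpops : v ∉ L'.map Prod.fst := by
            rw [h2 v]; rintro (h | h); exact hvtodo h; exact hvrest h
          refine Or.inr ⟨(v, rest.toFinset) :: L', ?_, ?_, ?_, ?_, ?_⟩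
          · exact List.nodup_cons.2 ⟨by simpa using hvpops, by simpa using h1⟩
          · intro x
            simp only [List.map_cons, List.mem_cons, h2 x]
            tauto
          · intro p hp
            rcases List.mem_cons.1 hp with hp | hp
            · subst hp
              calc rest.toFinset.card ≤ rest.length := List.toFinset_card_le _
                _ ≤ n := by simp only [List.length_cons] at hlen; omega
            · exact h3 p hp
          · -- P4
            intro u hu j hj hnp
            rcases List.mem_cons.1 hu with hu | hu
            · exact absurd rfl (hu ▸ hnp 0 (Nat.zero_le _) (by simp))
            · match j with
              | 0 => simpa using hu
              | j + 1 =>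
                have hj' : j < L'.length := by simpa using hj
                have hnp' : notPopped L' u j := by
                  intro i hi hli
                  have := hnp (i + 1) (by omega) (by simpa using hli)
                  simpa using this
                simpa using h4 u hu j hj' hnp'
          · -- P3
            intro u w hadj' hu s hs heq j hj hsj hnp
            have hunv : u ≠ v := fun h => (hnp 0 (Nat.zero_le _) (by simp)) (by simp [h])
            match s, hs, heq with
            | 0, hs, heq =>
              have hwv : w = v := by simpa using heq.symm
              subst hwv
              have hurest : u ∈ rest := by
                rcases hu with hu | hu
                · exact absurd ⟨u, hu, hadj'.symm⟩ hnb
                · rcases List.mem_cons.1 hu with hu | hu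
                  · exact absurd hu hunv
                  · exact hu
              match j with
              | 0 => simpa using hurest
              | j + 1 =>
                have hj' : j < L'.length := by simpa using hj
                have hnp' : notPopped L' u j := by
                  intro i hi hli
                  have := hnp (i + 1) (by omega) (by simpa using hli)
                  simpa using this
                simpa using h4 u hurest j hj' hnp'
            | s + 1, hs, heq =>
              match j, hj, hsj with
              | j + 1, hj, hsj =>
                have hs' : s < L'.length := by simpa using hs
                have hj' : j < L'.length := by simpa using hj
                have hnp' : notPopped L' u j := by
                  intro i hi hli
                  have := hnp (i + 1) (by omega) (by simpa using hli)
                  simpa using this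
                have hu' : u ∈ todo ∨ u ∈ rest := by
                  rcases hu with hu | hu
                  · exact Or.inl hu
                  · rcases List.mem_cons.1 hu with hu | hu
                    · exact absurd hu hunv
                    · exact Or.inr hu
                have heq' : (L'[s]'hs').1 = w := by simpa using heq
                simpa using h5 u w hadj' hu' s hs' heq' j hj' (by omega) hnp'
lemma dfs_top {V : Type*} [Fintype V] [DecidableEq V] (H : SimpleGraph V) (n : ℕ) :
    (∃ l : List V, l.Nodup ∧ l.Chain' H.Adj ∧ l.length = n) ∨
    ∃ L : List (V × Finset V),
      L.length = Fintype.card V ∧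
      (L.map Prod.fst).Nodup ∧
      (∀ x : V, x ∈ L.map Prod.fst) ∧
      (∀ p ∈ L, p.2.card ≤ n) ∧
      (∀ u w : V, H.Adj u w →
        ∀ (s : ℕ) (hs : s < L.length), (L[s]'hs).1 = w →
        ∀ (j : ℕ) (hj : j < L.length), s ≤ j → notPopped L u j → u ∈ (L[j]'hj).2) := by
  rcases dfs_aux H n (2 * (Finset.univ : Finset V).card) [] Finset.univ (by simp)
    (by simp) (by simp [List.Chain']) (by simp) (by simp) with hL | ⟨L, h1, h2, h3, h4, h5⟩
  · exact Or.inl hL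
  · refine Or.inr ⟨L, ?_, h1, ?_, h3, ?_⟩
    · have hall : ∀ x : V, x ∈ L.map Prod.fst := by
        intro x; rw [h2 x]; simp
      have : (L.map Prod.fst).toFinset = Finset.univ := by
        ext x; simp [hall x]
      have hcard := List.toFinset_card_of_nodup h1
      rw [this] at hcard
      simpa using hcard.symm
    · intro x; rw [h2 x]; simp
    · intro u w hadj s hs heq j hj hsj hnp
      exact h5 u w hadj (Or.inl (by simp)) s hs heq j hj hsj hnp

lemma crossEdges_def {V : Type*} (G : SimpleGraph V) (S T : Set V) (e : Sym2 V) :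
    e ∈ crossEdges G S T ↔ e ∈ G.edgeSet ∧ (∀ v ∈ e, v ∈ S ∪ T) ∧ ∃ v ∈ e, v ∈ S :=
  Iff.rfl

lemma getElem_idx_congr {α : Type*} (l : List α) {i j : ℕ} (h : i = j) (hi : i < l.length) :
    l[i]'hi = l[j]'(h ▸ hi) := by subst h; rfl

lemma mul_step {j m n : ℕ} (h : j < m) : j * n + n ≤ m * n := by
  have h2 := Nat.mul_le_mul_right n (show j + 1 ≤ m from h)
  rwa [Nat.add_mul, Nat.one_mul] at h2

lemma color_cover {n m : ℕ} (hn : 1 ≤ n) (hm : 2 ≤ m) {V : Type*} [Fintype V] [DecidableEq V]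
    (hcard : Fintype.card V = m * n)
    (G H : SimpleGraph V) (hHG : ∀ a b, H.Adj a b → G.Adj a b)
    (hnopath : ¬ ∃ l : List V, l.Nodup ∧ l.Chain' H.Adj ∧ l.length = n) :
    ∃ S T : ℕ → Finset V,
      (∀ j < m, (S j).card = n ∧ (T j).card = n ∧ Disjoint (S j) (T j)) ∧
      H.edgeSet ⊆ ⋃ j ∈ Finset.range m, crossEdges G ↑(S j) ↑(T j) := by
  rcases dfs_top H n with hL | ⟨L, hlen, h1, h2, h3, h5⟩
  · exact absurd hL hnopath
  set P : List V := L.map Prod.fst with hP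
  have hPLlen : P.length = L.length := by rw [hP]; exact List.length_map _
  have hLlen : L.length = m * n := by rw [hlen, hcard]
  have hPlen : P.length = m * n := by rw [hPLlen, hLlen]
  have hPL : ∀ (i : ℕ) (hi : i < L.length), P[i]'(by omega) = (L[i]'hi).1 := by
    intro i hi
    exact List.getElem_map _
  set S : ℕ → Finset V := fun j => ((P.drop (j * n)).take n).toFinset with hS
  have hseg : ∀ j < m, ((P.drop (j * n)).take n).length = n := by
    intro j hj
    rw [List.length_take, List.length_drop, hPlen]
    have := mul_step (n := n) hj
    omega
  have hsegnd : ∀ j, ((P.drop (j * n)).take n).Nodup :=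
    fun j => List.Nodup.sublist ((List.take_sublist _ _).trans (List.drop_sublist _ _)) h1
  have hScard : ∀ j < m, (S j).card = n := by
    intro j hj
    show ((P.drop (j * n)).take n).toFinset.card = n
    rw [List.toFinset_card_of_nodup (hsegnd j), hseg j hj]
  have hmemS : ∀ (j i : ℕ), j < m → j * n ≤ i → i < j * n + n → ∀ (hi : i < P.length),
      (P[i]'hi) ∈ S j := by
    intro j i hj hji hij hi
    show (P[i]'hi) ∈ ((P.drop (j * n)).take n).toFinset
    rw [List.mem_toFinset, List.mem_iff_getElem]
    have hlt : i - j * n < ((P.drop (j * n)).take n).length := by rw [hseg j hj]; omega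
    refine ⟨i - j * n, hlt, ?_⟩
    rw [List.getElem_take, List.getElem_drop]
    exact getElem_idx_congr P (by omega) _
  have hmemS' : ∀ (j : ℕ), j < m → ∀ x ∈ S j, ∃ (i : ℕ) (hi : i < P.length),
      j * n ≤ i ∧ i < j * n + n ∧ P[i]'hi = x := by
    intro j hj x hx
    rw [hS] at hx
    simp only [List.mem_toFinset] at hx
    rw [List.mem_iff_getElem] at hx
    obtain ⟨i, hi, hix⟩ := hx
    have hi' := hi
    rw [hseg j hj] at hi'
    rw [List.getElem_take, List.getElem_drop] at hix
    have hjn : j * n + i < P.length := by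
      rw [hPlen]
      have := mul_step (n := n) hj
      omega
    exact ⟨j * n + i, hjn, by omega, by omega, hix⟩
  have hQidx : ∀ j < m, j * n + (n - 1) < L.length := by
    intro j hj
    rw [hLlen]
    have := mul_step (n := n) hj
    omega
  have hTex : ∀ j : ℕ, ∃ T : Finset V,
      (∀ (hj : j < m), ((L[j * n + (n - 1)]'(hQidx j hj)).2 \ S j) ⊆ T) ∧
      (j < m → T ⊆ (S j)ᶜ ∧ T.card = n) := by
    intro j
    by_cases hj : j < m
    · have hQS : ((L[j * n + (n - 1)]'(hQidx j hj)).2 \ S j) ⊆ (S j)ᶜ := by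
        intro x hx
        rw [Finset.mem_compl]
        exact (Finset.mem_sdiff.1 hx).2
      have hQle : ((L[j * n + (n - 1)]'(hQidx j hj)).2 \ S j).card ≤ n := by
        calc ((L[j * n + (n - 1)]'(hQidx j hj)).2 \ S j).card
            ≤ (L[j * n + (n - 1)]'(hQidx j hj)).2.card :=
              Finset.card_le_card Finset.sdiff_subset
          _ ≤ n := h3 _ (List.getElem_mem _)
      have hcompl : n ≤ (S j)ᶜ.card := by
        rw [Finset.card_compl, hcard, hScard j hj]
        have : 2 * n ≤ m * n := Nat.mul_le_mul_right n hm
        omega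
      obtain ⟨T, hT1, hT2, hT3⟩ := Finset.exists_subsuperset_card_eq hQS hQle hcompl
      exact ⟨T, fun _ => hT1, fun _ => ⟨hT2, hT3⟩⟩
    · exact ⟨∅, fun h => absurd h hj, fun h => absurd h hj⟩
  choose T hT1 hT2 using hTex
  refine ⟨S, T, ?_, ?_⟩
  · intro j hj
    obtain ⟨hTc, hTn⟩ := hT2 j hj
    refine ⟨hScard j hj, hTn, ?_⟩
    rw [Finset.disjoint_left]
    intro x hx hxT
    exact (Finset.mem_compl.1 (hTc hxT)) hx
  · -- coverage
    intro e he
    have main : ∀ (x y : V), H.Adj x y → ∀ (ix iy : ℕ) (hix : ix < P.length)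
        (hiy : iy < P.length), P[ix]'hix = x → P[iy]'hiy = y → ix < iy →
        s(x, y) ∈ ⋃ j ∈ Finset.range m, crossEdges G ↑(S j) ↑(T j) := by
      intro x y hxy ix iy hix hiy hPx hPy hixy
      have hnpos : 0 < n := hn
      obtain ⟨j, hjm, hjle, hjlt⟩ : ∃ j, j < m ∧ j * n ≤ ix ∧ ix < j * n + n := by
        refine ⟨ix / n, ?_, ?_, ?_⟩
        · rw [Nat.div_lt_iff_lt_mul hnpos]
          rw [hPlen] at hix
          exact hix
        · exact Nat.div_mul_le_self ix n
        · have h2 := Nat.div_add_mod ix n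
          have h1 : ix % n < n := Nat.mod_lt _ hnpos
          rw [Nat.mul_comm] at h2
          omega
      have hxS : x ∈ S j := hPx ▸ hmemS j ix hjm hjle hjlt hix
      have hjendL : j * n + (n - 1) < L.length := hQidx j hjm
      have hixle : ix ≤ j * n + (n - 1) := by omega
      by_cases hycase : iy < j * n + n
      · have hyS : y ∈ S j := hPy ▸ hmemS j iy hjm (by omega) hycase hiy
        refine Set.mem_biUnion (Finset.mem_range.2 hjm) ?_
        rw [crossEdges_def]
        refine ⟨G.mem_edgeSet.2 (hHG x y hxy), ?_, ⟨x, ?_, ?_⟩⟩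
        · intro v hv
          rcases Sym2.mem_iff.1 hv with hv | hv
          · exact Or.inl (by simpa [hv] using hxS)
          · exact Or.inl (by simpa [hv] using hyS)
        · exact Sym2.mem_mk_left _ _
        · simpa using hxS
      · push_neg at hycase
        have hyend : j * n + (n - 1) < iy := by omega
        have hynotS : y ∉ S j := by
          intro hyS
          obtain ⟨i, hi, hi1, hi2, hiP⟩ := hmemS' j hjm y hyS
          have : i = iy :=
            (List.Nodup.getElem_inj_iff h1 (hi := hi) (hj := hiy)).1 (hiP.trans hPy.symm)
          omega
        have hnp : notPopped L y (j * n + (n - 1)) := by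
          intro i hi hli
          intro hcon
          have hiP : i < P.length := by omega
          have hPi : P[i]'hiP = y := by rw [hPL i hli]; exact hcon
          have : i = iy :=
            (List.Nodup.getElem_inj_iff h1 (hi := hiP) (hj := hiy)).1 (hPi.trans hPy.symm)
          omega
        have hixL : ix < L.length := by omega
        have heqx : (L[ix]'hixL).1 = x := by rw [← hPL ix hixL]; exact hPx
        have hyQ : y ∈ (L[j * n + (n - 1)]'hjendL).2 :=
          h5 y x hxy.symm ix hixL heqx _ hjendL hixle hnp
        have hyT : y ∈ T j :=
          hT1 j hjm (Finset.mem_sdiff.2 ⟨hyQ, hynotS⟩)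
        refine Set.mem_biUnion (Finset.mem_range.2 hjm) ?_
        rw [crossEdges_def]
        refine ⟨G.mem_edgeSet.2 (hHG x y hxy), ?_, ⟨x, ?_, ?_⟩⟩
        · intro v hv
          rcases Sym2.mem_iff.1 hv with hv | hv
          · exact Or.inl (by simpa [hv] using hxS)
          · exact Or.inr (by simpa [hv] using hyT)
        · exact Sym2.mem_mk_left _ _
        · simpa using hxS
    induction e using Sym2.ind with
    | _ a b =>
      have hab : H.Adj a b := H.mem_edgeSet.1 he
      obtain ⟨ia, hia, hPa⟩ := List.mem_iff_getElem.1 (h2 a)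
      obtain ⟨ib, hib, hPb⟩ := List.mem_iff_getElem.1 (h2 b)
      rcases lt_trichotomy ia ib with h | h | h
      · exact main a b hab ia ib hia hib hPa hPb h
      · exfalso
        apply hab.ne
        rw [← hPa, ← hPb]
        exact getElem_idx_congr _ h _
      · have := main b a hab.symm ib ia hib hia hPb hPa h
        rwa [Sym2.eq_swap]

/-- The subgraph of `G` consisting of the edges of colour `k`. -/
def colourClass {V : Type*} {r : ℕ} (G : SimpleGraph V) (c : Sym2 V → Fin r) (k : Fin r) :
    SimpleGraph V where
  Adj a b := G.Adj a b ∧ c s(a, b) = k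
  symm := by
    constructor
    intro a b h
    exact ⟨h.1.symm, by rw [Sym2.eq_swap]; exact h.2⟩
  loopless := ⟨fun a h => G.loopless.irrefl a h.1⟩

lemma ncard_biUnion_le {α ι : Type*} [Finite α] (s : Finset ι) (f : ι → Set α) :
    (⋃ i ∈ s, f i).ncard ≤ ∑ i ∈ s, (f i).ncard := by
  classical
  induction s using Finset.induction_on with
  | empty => simp
  | insert _ _ hnotmem ih =>
    rename_i a s
    rw [Finset.sum_insert hnotmem, Finset.set_biUnion_insert]
    exact le_trans (Set.ncard_union_le _ _) (Nat.add_le_add_left ih _)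

/-- If `G` has `7rn` vertices, at least `500 (log r) r² n` edges, and every two
disjoint vertex sets `S, T` of size `n` span at most `70 (log r) n` edges with an
endpoint in `S`, then `G → (Pₙ)_r`. -/
theorem good_graph_arrows_path (r n : ℕ) (hr : 2 ≤ r) (hn : 1 ≤ n)
    (G : SimpleGraph (Fin (7 * r * n)))
    (ha : 500 * Real.log r * r ^ 2 * n ≤ (G.edgeSet.ncard : ℝ))
    (hb : ∀ S T : Set (Fin (7 * r * n)), Disjoint S T → S.ncard = n → T.ncard = n →
      ((crossEdges G S T).ncard : ℝ) ≤ 70 * Real.log r * n) :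
    Arrows G (pathGraph n) r := by
  classical
  intro c
  by_cases hpath : ∃ (k : Fin r) (l : List (Fin (7 * r * n))), l.Nodup ∧ l.Chain' (colourClass G c k).Adj ∧ l.length = n
  · obtain ⟨k, l, hnd, hch, hlen⟩ := hpath
    refine ⟨k, fun i => l.get ⟨i.val, hlen.symm ▸ i.isLt⟩, ?_, ?_⟩
    · intro a b hab
      have h2 := List.nodup_iff_injective_get.1 hnd hab
      have hv : a.val = b.val := by simpa using h2
      exact Fin.ext hv
    · intro a b hab
      rcases (SimpleGraph.pathGraph_adj).1 hab with h | h
      · have hlt : (a : ℕ) < l.length - 1 := by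
          have := b.isLt
          omega
        have hc : (colourClass G c k).Adj (l.get ⟨a.val, by omega⟩) (l.get ⟨a.val + 1, by omega⟩) :=
          List.isChain_iff_getElem.1 hch a.val (by omega)
        have hidx : (⟨a.val + 1, by omega⟩ : Fin l.length) = ⟨b.val, hlen.symm ▸ b.isLt⟩ :=
          Fin.ext h
        rw [hidx] at hc
        exact hc
      · have hlt : (b : ℕ) < l.length - 1 := by
          have := a.isLt
          omega
        have hc : (colourClass G c k).Adj (l.get ⟨b.val, by omega⟩) (l.get ⟨b.val + 1, by omega⟩) :=
          List.isChain_iff_getElem.1 hch b.val (by omega)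
        have hidx : (⟨b.val + 1, by omega⟩ : Fin l.length) = ⟨a.val, hlen.symm ▸ a.isLt⟩ :=
          Fin.ext h
        rw [hidx] at hc
        refine ⟨hc.1.symm, ?_⟩
        rw [Sym2.eq_swap]
        exact hc.2
  · exfalso
    push_neg at hpath
    have hcardV : Fintype.card (Fin (7 * r * n)) = (7 * r) * n := by
      rw [Fintype.card_fin, Nat.mul_assoc]
    have hm : 2 ≤ 7 * r := by omega
    have hcover : ∀ k : Fin r, ∃ S T : ℕ → Finset (Fin (7 * r * n)),
        (∀ j < 7 * r, (S j).card = n ∧ (T j).card = n ∧ Disjoint (S j) (T j)) ∧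
        (colourClass G c k).edgeSet ⊆ ⋃ j ∈ Finset.range (7 * r), crossEdges G ↑(S j) ↑(T j) := by
      intro k
      refine color_cover hn hm hcardV G (colourClass G c k) (fun a b h => And.left h) ?_
      intro ⟨l, h1, h2, h3⟩
      exact hpath k l h1 h2 h3
    choose S T hST hsub using hcover
    have hcross : ∀ (k : Fin r) (j : ℕ), j < 7 * r →
        ((crossEdges G ↑(S k j) ↑(T k j)).ncard : ℝ) ≤ 70 * Real.log r * n := by
      intro k j hj
      obtain ⟨hS, hT, hdis⟩ := hST k j hj
      refine hb _ _ (Finset.disjoint_coe.2 hdis) ?_ ?_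
      · rw [Set.ncard_coe_finset, hS]
      · rw [Set.ncard_coe_finset, hT]
    have hkbound : ∀ k : Fin r, (((colourClass G c k).edgeSet.ncard : ℕ) : ℝ) ≤
        (7 * r : ℕ) * (70 * Real.log r * n) := by
      intro k
      have h1 : (colourClass G c k).edgeSet.ncard ≤
          ∑ j ∈ Finset.range (7 * r), (crossEdges G ↑(S k j) ↑(T k j)).ncard :=
        le_trans (Set.ncard_le_ncard (hsub k) (Set.toFinite _)) (ncard_biUnion_le _ _)
      calc (((colourClass G c k).edgeSet.ncard : ℕ) : ℝ)
          ≤ ((∑ j ∈ Finset.range (7 * r), (crossEdges G ↑(S k j) ↑(T k j)).ncard : ℕ) : ℝ) := by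
            exact_mod_cast h1
        _ = ∑ j ∈ Finset.range (7 * r), ((crossEdges G ↑(S k j) ↑(T k j)).ncard : ℝ) := by
            push_cast; ring
        _ ≤ ∑ j ∈ Finset.range (7 * r), (70 * Real.log r * n) :=
            Finset.sum_le_sum (fun j hj => hcross k j (Finset.mem_range.1 hj))
        _ = (7 * r : ℕ) * (70 * Real.log r * n) := by
            rw [Finset.sum_const, Finset.card_range, nsmul_eq_mul]
    have hGsub : G.edgeSet ⊆ ⋃ k ∈ (Finset.univ : Finset (Fin r)), (colourClass G c k).edgeSet := by
      intro e he
      induction e using Sym2.ind with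
      | _ a b =>
        have hadj : G.Adj a b := G.mem_edgeSet.1 he
        exact Set.mem_biUnion (Finset.mem_univ (c s(a, b)))
          ((colourClass G c (c s(a, b))).mem_edgeSet.2 (And.intro hadj rfl))
    have htotal : ((G.edgeSet.ncard : ℕ) : ℝ) ≤ (r : ℝ) * ((7 * r : ℕ) * (70 * Real.log r * n)) := by
      have h1 : G.edgeSet.ncard ≤ ∑ k ∈ (Finset.univ : Finset (Fin r)), (colourClass G c k).edgeSet.ncard :=
        le_trans (Set.ncard_le_ncard hGsub (Set.toFinite _)) (ncard_biUnion_le _ _)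
      calc ((G.edgeSet.ncard : ℕ) : ℝ)
          ≤ ((∑ k ∈ (Finset.univ : Finset (Fin r)), (colourClass G c k).edgeSet.ncard : ℕ) : ℝ) := by
            exact_mod_cast h1
        _ = ∑ k ∈ (Finset.univ : Finset (Fin r)), (((colourClass G c k).edgeSet.ncard : ℕ) : ℝ) := by
            push_cast; ring
        _ ≤ ∑ _k ∈ (Finset.univ : Finset (Fin r)), ((7 * r : ℕ) * (70 * Real.log r * n)) :=
            Finset.sum_le_sum (fun k _ => hkbound k)
        _ = (r : ℝ) * ((7 * r : ℕ) * (70 * Real.log r * n)) := by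
            rw [Finset.sum_const, Finset.card_univ, Fintype.card_fin, nsmul_eq_mul]
    have hlog : 0 < Real.log r := Real.log_pos (by exact_mod_cast hr)
    have hnpos : (0 : ℝ) < n := by exact_mod_cast hn
    have hrpos : (0 : ℝ) < r := by positivity
    have hE := le_trans ha htotal
    have hcast : ((7 * r : ℕ) : ℝ) = 7 * (r : ℝ) := by push_cast; ring
    rw [hcast] at hE
    nlinarith [mul_pos (mul_pos hlog (mul_pos hrpos hrpos)) hnpos]
end

section
/- Let n ≥ 1 be an integer and let G be a graph with at least n vertices that contains no path on n vertices as a subgraph. Then there exist disjoint sets S, T ⊆ V(G) with |S| = n and |T| < n such that every edge of G having at least one endpoint in S has both of its endpoints in S ∪ T. -/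
open SimpleGraph

/-- `G` contains a copy of `F`: an injective map preserving adjacency. -/
def ContainsCopy {V W : Type*} (G : SimpleGraph V) (F : SimpleGraph W) : Prop :=
  ∃ f : W → V, Function.Injective f ∧ ∀ a b, F.Adj a b → G.Adj (f a) (f b)

/-- DFS invariant: `l` is a path disjoint from `S`, and all edges leaving `S`
end in `S ∪ l`. -/
def DfsValid {V : Type*} (G : SimpleGraph V) (S : Finset V) (l : List V) : Prop :=
  l.Nodup ∧ l.Chain' G.Adj ∧ (∀ v ∈ l, v ∉ S) ∧
    ∀ a b, G.Adj a b → a ∈ S → b ∈ S ∨ b ∈ l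

lemma adj_get_of_chain {V : Type*} {G : SimpleGraph V} {l : List V}
    (hch : l.Chain' G.Adj) {i j : ℕ} (hi : i < l.length) (hj : j < l.length)
    (hij : i + 1 = j) : G.Adj (l.get ⟨i, hi⟩) (l.get ⟨j, hj⟩) := by
  subst hij
  exact List.isChain_iff_getElem.mp hch i (by omega)

lemma copy_of_chain {V : Type*} (G : SimpleGraph V) (n : ℕ) (l : List V)
    (hnd : l.Nodup) (hch : l.Chain' G.Adj) (hlen : n ≤ l.length) :
    ContainsCopy G (pathGraph n) := by
  refine ⟨fun i => l.get ⟨i.val, lt_of_lt_of_le i.2 hlen⟩, ?_, ?_⟩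
  · intro a b hab
    have h := (List.nodup_iff_injective_get).mp hnd hab
    have h2 : (a : ℕ) = (b : ℕ) := by
      have := congrArg (fun x : Fin l.length => x.val) h
      simpa using this
    exact Fin.ext h2
  · intro a b hab
    rw [pathGraph_adj] at hab
    rcases hab with h | h
    · exact adj_get_of_chain hch _ _ h
    · exact (adj_get_of_chain hch _ _ h).symm

lemma dfs_step {V : Type*} [Fintype V] [DecidableEq V] (G : SimpleGraph V) (n : ℕ)
    (hcard : n ≤ Fintype.card V) :
    ∀ M (S : Finset V) (l : List V), DfsValid G S l → S.card ≤ n →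
      2 * (Fintype.card V - S.card - l.length) + l.length ≤ M →
      ∃ S' l', DfsValid G S' l' ∧ S'.card = n := by
  intro M
  induction M using Nat.strong_induction_on with
  | _ M ih =>
    intro S l hv hle hM
    rcases eq_or_lt_of_le hle with h | h
    · exact ⟨S, l, hv, h⟩
    obtain ⟨hnd, hch, hdisj, hedge⟩ := hv
    have hcount : S.card + l.length ≤ Fintype.card V := by
      have hdj : Disjoint S l.toFinset := by
        rw [Finset.disjoint_right]
        intro v hvl
        exact hdisj v (List.mem_toFinset.mp hvl)
      calc S.card + l.length = S.card + l.toFinset.card := by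
            rw [List.toFinset_card_of_nodup hnd]
        _ = (S ∪ l.toFinset).card := (Finset.card_union_of_disjoint hdj).symm
        _ ≤ Fintype.card V := Finset.card_le_univ _
    match l with
    | [] =>
      -- start a new path at any unvisited vertex
      have hex : ∃ v, v ∉ S := by
        by_contra hc
        push_neg at hc
        have : S = Finset.univ := Finset.eq_univ_iff_forall.mpr hc
        have : S.card = Fintype.card V := by rw [this, Finset.card_univ]
        omega
      obtain ⟨v, hvS⟩ := hex
      have hv' : DfsValid G S [v] := by
        refine ⟨List.nodup_singleton v, List.isChain_singleton v, ?_, ?_⟩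
        · intro w hw
          simp only [List.mem_singleton] at hw
          subst hw; exact hvS
        · intro a b hab haS
          rcases hedge a b hab haS with hb | hb
          · exact Or.inl hb
          · simp at hb
      refine ih (2 * (Fintype.card V - S.card - 1) + 1) ?_ S [v] hv' hle le_rfl
      · simp only [List.length_nil] at hM hcount ⊢
        omega
    | w :: rest =>
      by_cases hb : ∃ v, G.Adj w v ∧ v ∉ S ∧ v ∉ w :: rest
      · -- push
        obtain ⟨v, hadj, hvS, hvl⟩ := hb
        have hv' : DfsValid G S (v :: w :: rest) := by
          refine ⟨List.nodup_cons.mpr ⟨hvl, hnd⟩, List.isChain_cons_cons.mpr ⟨hadj.symm, hch⟩, ?_, ?_⟩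
          · intro x hx
            rcases List.mem_cons.mp hx with h | h
            · subst h; exact hvS
            · exact hdisj x h
          · intro a b hab haS
            rcases hedge a b hab haS with h | h
            · exact Or.inl h
            · exact Or.inr (List.mem_cons_of_mem v h)
        have hvnotin : v ∉ S ∪ (w :: rest).toFinset := by
          simp only [Finset.mem_union, List.mem_toFinset]
          push_neg
          exact ⟨hvS, hvl⟩
        have hcount2 : S.card + (w :: rest).length + 1 ≤ Fintype.card V := by
          have hdj : Disjoint S (w :: rest).toFinset := by
            rw [Finset.disjoint_right]
            intro x hx
            exact hdisj x (List.mem_toFinset.mp hx)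
          have : (insert v (S ∪ (w :: rest).toFinset)).card ≤ Fintype.card V :=
            Finset.card_le_univ _
          rw [Finset.card_insert_of_notMem hvnotin, Finset.card_union_of_disjoint hdj,
            List.toFinset_card_of_nodup hnd] at this
          omega
        have hMlt : 2 * (Fintype.card V - S.card - (v :: w :: rest).length)
            + (v :: w :: rest).length < M := by
          simp only [List.length_cons] at hM hcount2 ⊢
          omega
        exact ih _ hMlt S (v :: w :: rest) hv' hle le_rfl
      · -- pop
        push_neg at hb
        have hwS : w ∉ S := hdisj w (List.mem_cons_self)
        have hv' : DfsValid G (insert w S) rest := by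
          refine ⟨(List.nodup_cons.mp hnd).2, hch.tail, ?_, ?_⟩
          · intro x hx
            simp only [Finset.mem_insert]
            push_neg
            constructor
            · intro hxw
              subst hxw
              exact (List.nodup_cons.mp hnd).1 hx
            · exact hdisj x (List.mem_cons_of_mem w hx)
          · intro a b hab haS
            rcases Finset.mem_insert.mp haS with ha | ha
            · subst ha
              have hbne : b ≠ a := (G.ne_of_adj hab).symm
              by_cases hbS : b ∈ S
              · exact Or.inl (Finset.mem_insert_of_mem hbS)
              · rcases List.mem_cons.mp (hb b hab hbS) with h | h
                · exact absurd h hbne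
                · exact Or.inr h
            · rcases hedge a b hab ha with h | h
              · exact Or.inl (Finset.mem_insert_of_mem h)
              · rcases List.mem_cons.mp h with h' | h'
                · subst h'; exact Or.inl (Finset.mem_insert_self _ _)
                · exact Or.inr h'
        have hcard' : (insert w S).card = S.card + 1 := Finset.card_insert_of_notMem hwS
        have hMlt : 2 * (Fintype.card V - (insert w S).card - rest.length)
            + rest.length < M := by
          rw [hcard']
          simp only [List.length_cons] at hM hcount ⊢
          omega
        exact ih _ hMlt (insert w S) rest hv' (by omega) le_rfl

/-- DFS lemma: if `G` has at least `n` vertices and contains no path on `n`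
vertices, then there are disjoint sets `S, T` with `|S| = n`, `|T| < n`, such that
every edge of `G` with an endpoint in `S` has both endpoints in `S ∪ T`. -/
theorem exists_separator_of_no_path {V : Type*} [Fintype V] (n : ℕ) (hn : 1 ≤ n)
    (G : SimpleGraph V) (hcard : n ≤ Fintype.card V)
    (hnopath : ¬ ContainsCopy G (pathGraph n)) :
    ∃ S T : Set V, Disjoint S T ∧ S.ncard = n ∧ T.ncard < n ∧
      ∀ e ∈ G.edgeSet, (∃ v ∈ e, v ∈ S) → ∀ v ∈ e, v ∈ S ∪ T := by
  classical
  obtain ⟨S, l, ⟨hnd, hch, hdisj, hedge⟩, hScard⟩ :=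
    dfs_step G n hcard (2 * Fintype.card V) ∅ []
      ⟨List.nodup_nil, List.isChain_nil, by simp, by simp⟩ (by simp) (by simp)
  have hlen : l.length < n := by
    by_contra hcon
    push_neg at hcon
    exact hnopath (copy_of_chain G n l hnd hch hcon)
  refine ⟨↑S, ↑l.toFinset, ?_, ?_, ?_, ?_⟩
  · rw [Set.disjoint_left]
    intro v hv hvl
    exact hdisj v (List.mem_toFinset.mp (by simpa using hvl)) (by simpa using hv)
  · rw [Set.ncard_coe_finset]; exact hScard
  · rw [Set.ncard_coe_finset, List.toFinset_card_of_nodup hnd]; exact hlen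
  · intro e he hSe
    induction e using Sym2.ind with
    | _ a b =>
      rw [SimpleGraph.mem_edgeSet] at he
      obtain ⟨w, hw, hwS⟩ := hSe
      have hwS' : w ∈ S := by simpa using hwS
      intro v hv
      have hv' : v = a ∨ v = b := Sym2.mem_iff.mp hv
      have hw' : w = a ∨ w = b := Sym2.mem_iff.mp hw
      have goal : ∀ x, x ∈ S ∨ x ∈ l → x ∈ (↑S ∪ ↑l.toFinset : Set V) := by
        intro x hx
        rcases hx with h | h
        · exact Or.inl (by simpa using h)
        · exact Or.inr (by simp [List.mem_toFinset, h])
      rcases hw' with h | h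
      · rw [h] at hwS'
        rcases hv' with h2 | h2 <;> rw [h2]
        · exact goal a (Or.inl hwS')
        · exact goal b (hedge a b he hwS')
      · rw [h] at hwS'
        rcases hv' with h2 | h2 <;> rw [h2]
        · exact goal a (hedge b a he.symm hwS')
        · exact goal b (Or.inl hwS')
end

section
/- Let r ≥ 2 and n ≥ 1 be integers and let G = (V, E) be a graph on exactly 7rn vertices that contains no path on n vertices as a subgraph, and suppose that for every two disjoint sets S, T ⊆ V with |S| = |T| = n, the number of edges of G having both endpoints in S ∪ T and at least one endpoint in S is at most 70 (log r) n. Then |E| ≤ 490 (log r) r n. -/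
open SimpleGraph

open Finset

section Select

open scoped Classical

variable {V : Type*} [Fintype V] [DecidableEq V] {G : SimpleGraph V}

/-- reachability from `v` staying inside `R`. -/
def ReachIn (G : SimpleGraph V) (R : Finset V) (v u : V) : Prop :=
  ∃ p : G.Walk v u, ∀ x ∈ p.support, x ∈ R

noncomputable def reachF (G : SimpleGraph V) (R : Finset V) (v : V) : Finset V :=
  R.filter (ReachIn G R v)

lemma mem_reachF {R : Finset V} {v u : V} :
    u ∈ reachF G R v ↔ u ∈ R ∧ ReachIn G R v u := Finset.mem_filter

lemma reachIn_refl {R : Finset V} {v : V} (hv : v ∈ R) : ReachIn G R v v :=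
  ⟨Walk.nil, by simpa using hv⟩

lemma reachIn_adj {R : Finset V} {v u w : V} (h : ReachIn G R v u) (ha : G.Adj u w)
    (hw : w ∈ R) : ReachIn G R v w := by
  obtain ⟨p, hp⟩ := h
  refine ⟨p.concat ha, ?_⟩
  intro x hx
  rw [Walk.support_concat] at hx
  rcases List.mem_append.mp hx with h1 | h1
  · exact hp x h1
  · simp at h1; subst h1; exact hw

lemma reachIn_trans {R : Finset V} {v u x : V} (h1 : ReachIn G R v u)
    (h2 : ReachIn G R u x) : ReachIn G R v x := by
  obtain ⟨p, hp⟩ := h1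
  obtain ⟨q, hq⟩ := h2
  refine ⟨p.append q, ?_⟩
  intro y hy
  rw [Walk.support_append] at hy
  rcases List.mem_append.mp hy with h | h
  · exact hp y h
  · exact hq y (List.mem_of_mem_tail h)

lemma reachF_closed {R : Finset V} {v u w : V} (hu : u ∈ reachF G R v)
    (ha : G.Adj u w) (hw : w ∈ R) : w ∈ reachF G R v := by
  rw [mem_reachF] at hu ⊢
  exact ⟨hw, reachIn_adj hu.2 ha hw⟩

lemma exists_first_step {R : Finset V} {v a : V} (h : ReachIn G R v a) (hne : a ≠ v) :
    ∃ u, G.Adj v u ∧ u ∈ R := by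
  obtain ⟨p, hp⟩ := h
  cases p with
  | nil => exact absurd rfl hne
  | cons h' p' =>
    refine ⟨_, h', hp _ ?_⟩
    rw [Walk.support_cons]
    exact List.mem_cons_of_mem _ p'.start_mem_support

/-- key avoidance lemma: if `B` is the reach-set of `u` in `R \ {v}`, anything
reachable from `v` in `R` but not in `B` is reachable avoiding `B`. -/
lemma reach_avoid {R : Finset V} {v x : V} (hx : ReachIn G R v x)
    {B : Finset V} {u : V} (hB : B = reachF G (R.erase v) u) (hxB : x ∉ B) (hvB : v ∉ B) :
    ReachIn G (R \ B) v x := by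
  obtain ⟨p0, hp0⟩ := hx
  set q := p0.bypass with hqdef
  have hq : q.IsPath := p0.bypass_isPath
  have hqR : ∀ y ∈ q.support, y ∈ R := fun y hy => hp0 y (p0.support_bypass_subset hy)
  refine ⟨q, fun y hy => ?_⟩
  rw [Finset.mem_sdiff]
  refine ⟨hqR y hy, fun hyB => ?_⟩
  -- split the path at y
  have hvy : v ≠ y := fun h => hvB (h ▸ hyB)
  have hspec := q.take_spec hy
  have hsup : q.support = (q.takeUntil y hy).support ++ (q.dropUntil y hy).support.tail := by
    conv_lhs => rw [← hspec]
    rw [Walk.support_append]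
  have hnd := hq.support_nodup
  rw [hsup, List.nodup_append] at hnd
  -- v is not in the support of the second part
  have hvdrop : v ∉ (q.dropUntil y hy).support := by
    intro hvd
    rw [(q.dropUntil y hy).support_eq_cons] at hvd
    rcases List.mem_cons.mp hvd with h | h
    · exact hvy h
    · exact hnd.2.2 _ (q.takeUntil y hy).start_mem_support _ h rfl
  -- the second part is a walk from y to x inside R \ {v}
  have hdropR : ∀ z ∈ (q.dropUntil y hy).support, z ∈ R.erase v := by
    intro z hz
    rw [Finset.mem_erase]
    exact ⟨fun h => hvdrop (h ▸ hz), hqR z (q.support_dropUntil_subset hy hz)⟩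
  -- so x is reachable from u in R \ {v}, i.e. x ∈ B, contradiction
  have hyB' : ReachIn G (R.erase v) u y := ((mem_reachF).mp (hB ▸ hyB)).2
  have : ReachIn G (R.erase v) u x :=
    reachIn_trans hyB' ⟨q.dropUntil y hy, hdropR⟩
  exact hxB (hB ▸ (mem_reachF).mpr ⟨reachIn_mem' this, this⟩)
where
  reachIn_mem' {R : Finset V} {v u : V} (h : ReachIn G R v u) : u ∈ R := by
    obtain ⟨p, hp⟩ := h; exact hp u p.end_mem_support
set_option linter.unusedSectionVars false

lemma selectRooted (G : SimpleGraph V) :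
    ∀ (N : ℕ) (R : Finset V), R.card ≤ N → ∀ v ∈ R, ∀ k : ℕ, k < (reachF G R v).card →
    ∃ (S : Finset V) (a : V) (p : G.Walk v a),
      S ⊆ R ∧ v ∉ S ∧ S.card = k ∧ p.IsPath ∧
      (∀ x ∈ p.support, x ∈ R ∧ x ∉ S) ∧
      (∀ u ∈ S, ∀ w, G.Adj u w → w ∈ R → w ∈ S ∨ w ∈ p.support) := by
  intro N
  induction N with
  | zero =>
    intro R hR v hv k hk
    have : reachF G R v ⊆ R := Finset.filter_subset _ _
    have := Finset.card_le_card this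
    omega
  | succ N ih =>
    intro R hR v hv k hk
    rcases Nat.eq_zero_or_pos k with rfl | hkpos
    · exact ⟨∅, v, Walk.nil, by simp, by simp, by simp, by simp [Walk.IsPath.nil],
        by simp [hv], by simp⟩
    -- k ≥ 1 : there is some a ∈ reachF \ {v}, hence a neighbor u of v in R
    have hvA : v ∈ reachF G R v := mem_reachF.mpr ⟨hv, reachIn_refl hv⟩
    have h2 : 1 ≤ ((reachF G R v).erase v).card := by
      rw [Finset.card_erase_of_mem hvA]; omega
    obtain ⟨a, ha⟩ := Finset.card_pos.mp h2
    rw [Finset.mem_erase] at ha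
    obtain ⟨u, hadj, huR⟩ := exists_first_step (mem_reachF.mp ha.2).2 ha.1
    have huv : u ≠ v := hadj.ne'
    set R₁ := R.erase v with hR₁
    have huR₁ : u ∈ R₁ := Finset.mem_erase.mpr ⟨huv, huR⟩
    have hR₁card : R₁.card ≤ N := by
      rw [hR₁, Finset.card_erase_of_mem hv]; omega
    set B := reachF G R₁ u with hBdef
    have hBR₁ : B ⊆ R₁ := Finset.filter_subset _ _
    have hvB : v ∉ B := fun h => (Finset.mem_erase.mp (hBR₁ h)).1 rfl
    have huB : u ∈ B := mem_reachF.mpr ⟨huR₁, reachIn_refl huR₁⟩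
    -- B ⊆ reachF G R v
    have hBA : B ⊆ reachF G R v := by
      intro y hy
      have hy' := (mem_reachF.mp hy).2
      have : ReachIn G R v y := by
        refine reachIn_trans ⟨Walk.cons hadj Walk.nil, ?_⟩ ?_
        · intro x hx; simp at hx
          rcases hx with rfl | rfl
          exacts [hv, huR]
        · obtain ⟨p, hp⟩ := hy'
          exact ⟨p, fun x hx => Finset.mem_of_mem_erase (hp x hx)⟩
      exact mem_reachF.mpr ⟨Finset.mem_of_mem_erase (mem_reachF.mp hy).1, this⟩
    by_cases hcase : k < B.card
    · -- recurse inside R₁ from u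
      obtain ⟨S, a', p', hSR, huS, hScard, hpath, hsupp, hbd⟩ :=
        ih R₁ hR₁card u huR₁ k hcase
      have hvp' : v ∉ p'.support := fun h => (Finset.mem_erase.mp (hsupp v h).1).1 rfl
      refine ⟨S, a', Walk.cons hadj p', ?_, ?_, hScard, ?_, ?_, ?_⟩
      · exact hSR.trans (Finset.erase_subset _ _)
      · exact fun h => (Finset.mem_erase.mp (hSR h)).1 rfl
      · rw [Walk.cons_isPath_iff]; exact ⟨hpath, hvp'⟩
      · intro x hx
        rw [Walk.support_cons] at hx
        rcases List.mem_cons.mp hx with rfl | hx'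
        · exact ⟨hv, fun h => (Finset.mem_erase.mp (hSR h)).1 rfl⟩
        · exact ⟨Finset.mem_of_mem_erase (hsupp x hx').1, (hsupp x hx').2⟩
      · intro s hs w hadj' hwR
        by_cases hwv : w = v
        · right; rw [Walk.support_cons]; exact hwv ▸ List.mem_cons_self
        · rcases hbd s hs w hadj' (Finset.mem_erase.mpr ⟨hwv, hwR⟩) with h | h
          · exact Or.inl h
          · right; rw [Walk.support_cons]; exact List.mem_cons_of_mem _ h
    · -- take all of B, recurse on R \ B from v
      push_neg at hcase
      set R₂ := R \ B with hR₂
      have hvR₂ : v ∈ R₂ := Finset.mem_sdiff.mpr ⟨hv, hvB⟩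
      have hR₂card : R₂.card ≤ N := by
        have h1 : R₂.card = R.card - B.card := Finset.card_sdiff_of_subset (hBR₁.trans (Finset.erase_subset _ _))
        have h2 : 1 ≤ B.card := Finset.card_pos.mpr ⟨u, huB⟩
        omega
      -- reach in R₂ is still big
      have hsub : reachF G R v \ B ⊆ reachF G R₂ v := by
        intro x hx
        rw [Finset.mem_sdiff] at hx
        have hx' : ReachIn G R₂ v x :=
          reach_avoid (mem_reachF.mp hx.1).2 hBdef hx.2 hvB
        exact mem_reachF.mpr ⟨Finset.mem_sdiff.mpr ⟨(mem_reachF.mp hx.1).1, hx.2⟩, hx'⟩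
      have hcard2 : k - B.card < (reachF G R₂ v).card := by
        have h1 : (reachF G R v \ B).card = (reachF G R v).card - B.card :=
          Finset.card_sdiff_of_subset hBA
        have h2 := Finset.card_le_card hsub
        omega
      obtain ⟨S', a', p', hS'R, hvS', hS'card, hpath, hsupp, hbd⟩ :=
        ih R₂ hR₂card v hvR₂ (k - B.card) hcard2
      have hdisj : Disjoint B S' := by
        refine Finset.disjoint_left.mpr fun y hy hyS' => ?_
        exact (Finset.mem_sdiff.mp (hS'R hyS')).2 hy
      refine ⟨B ∪ S', a', p', ?_, ?_, ?_, hpath, ?_, ?_⟩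
      · intro y hy
        rcases Finset.mem_union.mp hy with h | h
        · exact Finset.mem_of_mem_erase (hBR₁ h)
        · exact (Finset.mem_sdiff.mp (hS'R h)).1
      · intro h
        rcases Finset.mem_union.mp h with h | h
        exacts [hvB h, hvS' h]
      · rw [Finset.card_union_of_disjoint hdisj, hS'card]; omega
      · intro x hx
        have h1 := hsupp x hx
        have h2 := Finset.mem_sdiff.mp h1.1
        refine ⟨h2.1, fun h => ?_⟩
        rcases Finset.mem_union.mp h with h | h
        exacts [h2.2 h, h1.2 h]
      · intro s hs w hadj' hwR
        rcases Finset.mem_union.mp hs with hsB | hsS'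
        · by_cases hwv : w = v
          · right; exact hwv ▸ p'.start_mem_support
          · left
            exact Finset.mem_union_left _
              (reachF_closed hsB hadj' (Finset.mem_erase.mpr ⟨hwv, hwR⟩))
        · by_cases hwB : w ∈ B
          · exact Or.inl (Finset.mem_union_left _ hwB)
          · rcases hbd s hsS' w hadj' (Finset.mem_sdiff.mpr ⟨hwR, hwB⟩) with h | h
            exacts [Or.inl (Finset.mem_union_right _ h), Or.inr h]

lemma selectTop (G : SimpleGraph V) :
    ∀ (N : ℕ) (R : Finset V), R.card ≤ N → ∀ k : ℕ, k ≤ R.card →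
    ∃ (S : Finset V) (Q : List V),
      S ⊆ R ∧ S.card = k ∧
      (Q ≠ [] → ∃ (a b : V) (p : G.Walk a b), p.IsPath ∧ p.support = Q) ∧
      (∀ x ∈ Q, x ∈ R ∧ x ∉ S) ∧
      (∀ u ∈ S, ∀ w, G.Adj u w → w ∈ R → w ∈ S ∨ w ∈ Q) := by
  intro N
  induction N with
  | zero =>
    intro R hR k hk
    have hk0 : k = 0 := by omega
    exact ⟨∅, [], by simp, by simp [hk0], by simp, by simp, by simp⟩
  | succ N ih =>
    intro R hR k hk
    rcases Finset.eq_empty_or_nonempty R with rfl | ⟨v, hv⟩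
    · have hk0 : k = 0 := by simpa using hk
      exact ⟨∅, [], by simp, by simp [hk0], by simp, by simp, by simp⟩
    set A := reachF G R v with hAdef
    have hAR : A ⊆ R := Finset.filter_subset _ _
    have hvA : v ∈ A := mem_reachF.mpr ⟨hv, reachIn_refl hv⟩
    by_cases hcase : k < A.card
    · obtain ⟨S, a, p, hSR, hvS, hScard, hpath, hsupp, hbd⟩ :=
        selectRooted G (N + 1) R hR v hv k hcase
      refine ⟨S, p.support, hSR, hScard, fun _ => ⟨v, a, p, hpath, rfl⟩, hsupp, hbd⟩
    · push_neg at hcase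
      have hAcard : 1 ≤ A.card := Finset.card_pos.mpr ⟨v, hvA⟩
      have hRA : (R \ A).card = R.card - A.card := Finset.card_sdiff_of_subset hAR
      have hle : (R \ A).card ≤ N := by
        have := Finset.card_le_card hAR
        omega
      have hk' : k - A.card ≤ (R \ A).card := by omega
      obtain ⟨S', Q, hS'R, hS'card, hQpath, hQmem, hbd⟩ := ih (R \ A) hle (k - A.card) hk'
      have hdisj : Disjoint A S' := by
        refine Finset.disjoint_left.mpr fun y hy hyS' => ?_
        exact (Finset.mem_sdiff.mp (hS'R hyS')).2 hy
      refine ⟨A ∪ S', Q, ?_, ?_, hQpath, ?_, ?_⟩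
      · intro y hy
        rcases Finset.mem_union.mp hy with h | h
        exacts [hAR h, (Finset.mem_sdiff.mp (hS'R h)).1]
      · rw [Finset.card_union_of_disjoint hdisj, hS'card]
        have := Finset.card_le_card hAR
        omega
      · intro x hx
        have h1 := hQmem x hx
        have h2 := Finset.mem_sdiff.mp h1.1
        refine ⟨h2.1, fun h => ?_⟩
        rcases Finset.mem_union.mp h with h | h
        exacts [h2.2 h, h1.2 h]
      · intro s hs w hadj hwR
        rcases Finset.mem_union.mp hs with hsA | hsS'
        · exact Or.inl (Finset.mem_union_left _ (reachF_closed hsA hadj hwR))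
        · by_cases hwA : w ∈ A
          · exact Or.inl (Finset.mem_union_left _ hwA)
          · rcases hbd s hsS' w hadj (Finset.mem_sdiff.mpr ⟨hwR, hwA⟩) with h | h
            exacts [Or.inl (Finset.mem_union_right _ h), Or.inr h]

end Select

/-- If `G` has no copy of the path on `n` vertices, every path in `G` has fewer
than `n` vertices. -/
lemma path_short {V : Type*} {G : SimpleGraph V} {n : ℕ}
    (hnopath : ¬ ContainsCopy G (pathGraph n)) {a b : V} {p : G.Walk a b}
    (hp : p.IsPath) : p.support.length < n := by
  by_contra h
  push_neg at h
  apply hnopath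
  refine ⟨fun i => p.support.get ⟨i.1, lt_of_lt_of_le i.2 h⟩, ?_, ?_⟩
  · intro i j hij
    have := (hp.support_nodup.get_inj_iff).mp hij
    exact Fin.ext (by simpa using congrArg Fin.val this)
  · intro i j hij
    rw [pathGraph_adj] at hij
    have hchain := List.isChain_iff_getElem.mp p.isChain_adj_support
    rcases hij with hij | hij
    · have hlt : (i.1 : ℕ) < p.support.length - 1 := by
        have := j.2; omega
      have := hchain i.1 (by omega)
      have heq : (⟨i.1 + 1, by omega⟩ : Fin p.support.length) =
          ⟨j.1, lt_of_lt_of_le j.2 h⟩ := Fin.ext (by simpa using hij)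
      simpa [hij] using this
    · have hlt : (j.1 : ℕ) < p.support.length - 1 := by
        have := i.2; omega
      have := hchain j.1 (by omega)
      have heq : (⟨j.1 + 1, by omega⟩ : Fin p.support.length) =
          ⟨i.1, lt_of_lt_of_le i.2 h⟩ := Fin.ext (by simpa using hij)
      simpa [hij] using this.symm

section Main

variable {r n : ℕ}

lemma cover_lemma (r n : ℕ) (hr : 2 ≤ r) (hn : 1 ≤ n)
    (G : SimpleGraph (Fin (7 * r * n)))
    (hnopath : ¬ ContainsCopy G (pathGraph n))
    (hb : ∀ S T : Set (Fin (7 * r * n)), Disjoint S T → S.ncard = n → T.ncard = n →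
      ((crossEdges G S T).ncard : ℝ) ≤ 70 * Real.log r * n) :
    ∀ (m : ℕ) (R : Finset (Fin (7 * r * n))), R.card = m * n →
      (({e | e ∈ G.edgeSet ∧ ∀ v ∈ e, v ∈ (↑R : Set (Fin (7 * r * n)))}).ncard : ℝ)
        ≤ m * (70 * Real.log r * n) := by
  classical
  intro m
  induction m with
  | zero =>
    intro R hR
    have hRempty : R = ∅ := Finset.card_eq_zero.mp (by simpa using hR)
    have : {e | e ∈ G.edgeSet ∧ ∀ v ∈ e, v ∈ (↑R : Set (Fin (7 * r * n)))} = ∅ := by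
      ext e
      induction e using Sym2.ind with
      | _ x y =>
        simp only [Set.mem_setOf_eq, Set.mem_empty_iff_false, iff_false, not_and]
        intro _ hall
        have := hall x (by simp)
        simp [hRempty] at this
    rw [this]
    simp
  | succ m ih =>
    intro R hR
    have hnR : n ≤ R.card := by
      rw [hR]; exact Nat.le_mul_of_pos_left n (by omega)
    obtain ⟨S, Q, hSR, hScard, hQpath, hQmem, hbd⟩ :=
      selectTop G R.card R le_rfl n hnR
    -- Q is short
    have hQlen : Q.toFinset.card ≤ n := by
      rcases eq_or_ne Q [] with rfl | hQne
      · simp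
      · obtain ⟨a, b, p, hp, hsup⟩ := hQpath hQne
        have := path_short hnopath hp
        rw [hsup] at this
        exact le_trans (List.toFinset_card_le Q) (by omega)
    -- build T
    have hQsub : Q.toFinset ⊆ Finset.univ \ S := by
      intro x hx
      rw [List.mem_toFinset] at hx
      exact Finset.mem_sdiff.mpr ⟨Finset.mem_univ _, (hQmem x hx).2⟩
    have hcardV : (Finset.univ \ S).card = 7 * r * n - n := by
      rw [Finset.card_sdiff_of_subset (Finset.subset_univ _), Finset.card_univ, Fintype.card_fin, hScard]
    have h2n : 2 * n ≤ 7 * r * n := by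
      have h1 : 2 ≤ 7 * r := by omega
      exact Nat.mul_le_mul_right n h1
    have hnT : n ≤ (Finset.univ \ S).card := by omega
    obtain ⟨T, hQT, hTsub, hTcard⟩ := Finset.exists_subsuperset_card_eq hQsub hQlen hnT
    have hdisj : Disjoint (↑S : Set (Fin (7 * r * n))) ↑T := by
      exact Finset.disjoint_coe.mpr (Finset.disjoint_left.mpr fun x hxS hxT =>
        (Finset.mem_sdiff.mp (hTsub hxT)).2 hxS)
    -- split edges
    have key : {e | e ∈ G.edgeSet ∧ ∀ v ∈ e, v ∈ (↑R : Set (Fin (7 * r * n)))} ⊆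
        crossEdges G ↑S ↑T ∪
        {e | e ∈ G.edgeSet ∧ ∀ v ∈ e, v ∈ (↑(R \ S) : Set (Fin (7 * r * n)))} := by
      intro e
      induction e using Sym2.ind with
      | _ x y =>
        intro he
        obtain ⟨hE, hall⟩ := he
        have hadj : G.Adj x y := hE
        have hxR : x ∈ R := by have := hall x (by simp); simpa using this
        have hyR : y ∈ R := by have := hall y (by simp); simpa using this
        have hcross : ∀ z w : Fin (7 * r * n), z ∈ S → G.Adj z w → w ∈ R →
            w ∈ (↑S : Set (Fin (7 * r * n))) ∪ ↑T := by
          intro z w hzS hzw hwR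
          rcases hbd z hzS w hzw hwR with h | h
          · exact Or.inl h
          · exact Or.inr (hQT (List.mem_toFinset.mpr h))
        by_cases hxS : x ∈ S
        · refine Or.inl ⟨hE, ?_, ⟨x, by simp, hxS⟩⟩
          intro v hv
          rcases Sym2.mem_iff.mp hv with rfl | rfl
          · exact Or.inl hxS
          · exact hcross x v hxS hadj hyR
        · by_cases hyS : y ∈ S
          · refine Or.inl ⟨hE, ?_, ⟨y, by simp, hyS⟩⟩
            intro v hv
            rcases Sym2.mem_iff.mp hv with rfl | rfl
            · exact hcross y v hyS hadj.symm hxR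
            · exact Or.inl hyS
          · refine Or.inr ⟨hE, ?_⟩
            intro v hv
            rcases Sym2.mem_iff.mp hv with rfl | rfl
            · simpa using Finset.mem_sdiff.mpr ⟨hxR, hxS⟩
            · simpa using Finset.mem_sdiff.mpr ⟨hyR, hyS⟩
    have hcard' : (R \ S).card = m * n := by
      rw [Finset.card_sdiff_of_subset hSR, hR, hScard, Nat.succ_mul, Nat.add_sub_cancel]
    have hb1 := hb ↑S ↑T hdisj (by rw [Set.ncard_coe_finset, hScard])
      (by rw [Set.ncard_coe_finset, hTcard])
    have hb2 := ih (R \ S) hcard'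
    have hsplit : ({e | e ∈ G.edgeSet ∧ ∀ v ∈ e, v ∈ (↑R : Set (Fin (7 * r * n)))}).ncard ≤
        (crossEdges G ↑S ↑T).ncard +
        ({e | e ∈ G.edgeSet ∧ ∀ v ∈ e, v ∈ (↑(R \ S) : Set (Fin (7 * r * n)))}).ncard :=
      le_trans (Set.ncard_le_ncard key (Set.toFinite _)) (Set.ncard_union_le _ _)
    have hsplit' : (({e | e ∈ G.edgeSet ∧ ∀ v ∈ e, v ∈ (↑R : Set (Fin (7 * r * n)))}).ncard : ℝ) ≤
        ((crossEdges G ↑S ↑T).ncard : ℝ) +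
        ({e | e ∈ G.edgeSet ∧ ∀ v ∈ e, v ∈ (↑(R \ S) : Set (Fin (7 * r * n)))}).ncard := by
      exact_mod_cast hsplit
    push_cast
    linarith

end Main


/-- If `G` has `7rn` vertices, contains no path on `n` vertices, and every two
disjoint vertex sets `S, T` of size `n` span at most `70 (log r) n` edges with an
endpoint in `S`, then `G` has at most `490 (log r) r n` edges. -/
theorem edge_bound_of_no_path (r n : ℕ) (hr : 2 ≤ r) (hn : 1 ≤ n)
    (G : SimpleGraph (Fin (7 * r * n)))
    (hnopath : ¬ ContainsCopy G (pathGraph n))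
    (hb : ∀ S T : Set (Fin (7 * r * n)), Disjoint S T → S.ncard = n → T.ncard = n →
      ((crossEdges G S T).ncard : ℝ) ≤ 70 * Real.log r * n) :
    (G.edgeSet.ncard : ℝ) ≤ 490 * Real.log r * r * n := by
  have hcov := cover_lemma r n hr hn G hnopath hb (7 * r) Finset.univ
    (by rw [Finset.card_univ, Fintype.card_fin])
  have heq : {e | e ∈ G.edgeSet ∧ ∀ v ∈ e, v ∈ (↑(Finset.univ : Finset (Fin (7 * r * n))) :
      Set (Fin (7 * r * n)))} = G.edgeSet := by
    ext e; simp
  rw [heq] at hcov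
  calc (G.edgeSet.ncard : ℝ) ≤ (7 * r : ℕ) * (70 * Real.log r * n) := hcov
    _ = 490 * Real.log r * r * n := by push_cast; ring
end

section
/- For every integer r ≥ 2 there exists an integer N such that for every integer n ≥ N, the r-colour size-Ramsey number of the path on n vertices satisfies R̂(P_n, r) ≤ 33 · r · 4^r · n. -/
open SimpleGraph

/-- The `r`-colour size-Ramsey number of `F`: the smallest number of edges of a
(finite) graph `G` satisfying `G → (F)_r`. -/
noncomputable def sizeRamsey {W : Type*} (F : SimpleGraph W) (r : ℕ) : ℕ :=
  sInf {m | ∃ (N : ℕ) (G : SimpleGraph (Fin N)), G.edgeSet.ncard = m ∧ Arrows G F r}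


open Finset



lemma dfs_lemma {V : Type*} [Fintype V] [DecidableEq V] (H : SimpleGraph V)
    (A : Finset V) (n : ℕ) :
    (∃ l : List V, l.Nodup ∧ l.length = n ∧ l.Chain' H.Adj ∧ ∀ v ∈ l, v ∈ A) ∨
    (∃ X Y : Finset V, X ⊆ A ∧ Y ⊆ A ∧ Disjoint X Y ∧ X.card = Y.card ∧
      A.card < 2 * X.card + n ∧ ∀ x ∈ X, ∀ y ∈ Y, ¬ H.Adj x y) := by
  classical
  -- invariant states
  set Inv : ℕ → Prop := fun k => ∃ (D : Finset V) (S : List V),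
    D ⊆ A ∧ (∀ v ∈ S, v ∈ A) ∧ S.Nodup ∧ S.Chain' H.Adj ∧ (∀ v ∈ S, v ∉ D) ∧
    (∀ d ∈ D, ∀ v ∈ A, v ∉ D → v ∉ S → ¬ H.Adj d v) ∧ 2 * D.card + S.length = k
    with hInv
  have key : ∀ k, k ≤ A.card → Inv k := by
    intro k
    induction k with
    | zero => intro _; exact ⟨∅, [], by simp, by simp, by simp, by simp [List.Chain'], by simp, by simp, by simp⟩
    | succ k ih =>
      intro hk
      obtain ⟨D, S, hDA, hSA, hnd, hch, hDS, hedge, hcount⟩ := ih (Nat.le_of_succ_le hk)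
      match S with
      | List.nil =>
        -- pick a fresh vertex
        have hDcard : 2 * D.card = k := by simpa using hcount
        have : D ⊂ A := by
          refine ⟨hDA, fun hAD => ?_⟩
          have : A.card ≤ D.card := Finset.card_le_card hAD
          omega
        obtain ⟨u, huA, huD⟩ := Finset.exists_of_ssubset this
        refine ⟨D, [u], hDA, by simpa using huA, by simp, by simp [List.Chain'], by simpa using huD, ?_, by simpa using hcount⟩
        intro d hd v hv hvD hvS
        exact hedge d hd v hv hvD (by simp)
      | List.cons v t =>
        by_cases hex : ∃ u ∈ A, u ∉ D ∧ u ∉ (v :: t) ∧ H.Adj v u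
        · obtain ⟨u, huA, huD, huS, hadj⟩ := hex
          refine ⟨D, u :: v :: t, hDA, ?_, ?_, ?_, ?_, ?_, ?_⟩
          · intro x hx
            rcases List.mem_cons.1 hx with h | h
            · exact h ▸ huA
            · exact hSA x h
          · exact List.nodup_cons.2 ⟨huS, hnd⟩
          · exact List.isChain_cons.2 ⟨fun y hy => by
              cases t with
              | nil => simp at hy; exact hy ▸ hadj.symm
              | cons a b => simp at hy; exact hy ▸ hadj.symm, hch⟩
          · intro x hx
            rcases List.mem_cons.1 hx with h | h
            · exact h ▸ huD
            · exact hDS x h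
          · intro d hd w hw hwD hwS
            exact hedge d hd w hw hwD (fun hmem => hwS (List.mem_cons_of_mem u hmem))
          · simp at hcount ⊢; omega
        · push_neg at hex
          refine ⟨insert v D, t, ?_, ?_, ?_, ?_, ?_, ?_, ?_⟩
          · exact Finset.insert_subset (hSA v (by simp)) hDA
          · exact fun x hx => hSA x (List.mem_cons_of_mem v hx)
          · exact (List.nodup_cons.1 hnd).2
          · exact hch.tail
          · intro x hx hmem
            rcases Finset.mem_insert.1 hmem with h | h
            · exact (List.nodup_cons.1 hnd).1 (h ▸ hx)
            · exact hDS x (List.mem_cons_of_mem v hx) h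
          · intro d hd w hw hwD hwS
            have hwv : w ≠ v := fun h => hwD (h ▸ Finset.mem_insert_self v D)
            have hwD' : w ∉ D := fun h => hwD (Finset.mem_insert_of_mem h)
            have hwS' : w ∉ v :: t := by
              intro h; rcases List.mem_cons.1 h with h | h
              · exact hwv h
              · exact hwS h
            rcases Finset.mem_insert.1 hd with h | h
            · exact h ▸ (hex w hw hwD' hwS')
            · exact hedge d h w hw hwD' hwS'
          · have : v ∉ D := hDS v (by simp)
            rw [Finset.card_insert_of_notMem this]
            simp at hcount ⊢; omega
  obtain ⟨D, S, hDA, hSA, hnd, hch, hDS, hedge, hcount⟩ := key A.card le_rfl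
  by_cases hlen : n ≤ S.length
  · left
    refine ⟨S.take n, hnd.sublist (List.take_sublist n S), by simp [hlen], hch.take n,
      fun x hx => hSA x (List.mem_of_mem_take hx)⟩
  · right
    push_neg at hlen
    set R := (A \ D).filter (fun x => x ∉ S) with hR
    have hStoA : S.toFinset ⊆ A := fun x hx => hSA x (List.mem_toFinset.1 hx)
    have hcardS : S.toFinset.card = S.length := List.toFinset_card_of_nodup hnd
    have hRcard : R.card = A.card - D.card - S.length := by
      rw [hR]
      have : (A \ D).filter (fun x => x ∉ S) = (A \ D) \ S.toFinset := by
        ext x; simp [List.mem_toFinset]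
      rw [this, Finset.card_sdiff_of_subset, Finset.card_sdiff_of_subset hDA, hcardS]
      intro x hx
      simp only [List.mem_toFinset] at hx
      simp only [Finset.mem_sdiff]
      exact ⟨hSA x hx, fun h => hDS x hx h⟩
    have hDcard : D.card ≤ A.card := Finset.card_le_card hDA
    refine ⟨D, R, hDA, ?_, ?_, ?_, ?_, ?_⟩
    · intro x hx; exact (Finset.mem_sdiff.1 (Finset.mem_filter.1 hx).1).1
    · rw [Finset.disjoint_left]
      intro x hxD hxR
      exact (Finset.mem_sdiff.1 (Finset.mem_filter.1 hxR).1).2 hxD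
    · omega
    · omega
    · intro x hx y hy
      have h1 := Finset.mem_filter.1 hy
      have h2 := Finset.mem_sdiff.1 h1.1
      exact hedge x hx y h2.1 h2.2 (by simpa using h1.2)

/-- turn a nodup chain of length n into a mono path conclusion -/
lemma list_to_mono {N r n : ℕ} (G : SimpleGraph (Fin N)) (c : Sym2 (Fin N) → Fin r)
    (k : Fin r) (l : List (Fin N)) (hnd : l.Nodup) (hlen : l.length = n)
    (hch : l.Chain' (fun x y => G.Adj x y ∧ c s(x, y) = k)) :
    ∃ (k : Fin r) (f : Fin n → Fin N), Function.Injective f ∧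
      ∀ a b, (pathGraph n).Adj a b → G.Adj (f a) (f b) ∧ c s(f a, f b) = k := by
  have hcons : ∀ (i j : ℕ) (hi : i < l.length) (hj : j < l.length), i + 1 = j →
      G.Adj (l.get ⟨i, hi⟩) (l.get ⟨j, hj⟩) ∧ c s(l.get ⟨i, hi⟩, l.get ⟨j, hj⟩) = k := by
    intro i j hi hj hij
    subst hij
    exact List.isChain_iff_getElem.1 hch i (by omega)
  refine ⟨k, fun i => l.get (Fin.cast hlen.symm i), ?_, ?_⟩
  · intro a b hab
    have := List.nodup_iff_injective_get.1 hnd hab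
    simpa [Fin.ext_iff] using this
  · intro a b hab
    rw [pathGraph_adj] at hab
    rcases hab with h | h
    · exact hcons a.val b.val (by rw [hlen]; exact a.isLt) (by rw [hlen]; exact b.isLt) h
    · have h2 := hcons b.val a.val (by rw [hlen]; exact b.isLt) (by rw [hlen]; exact a.isLt) h
      exact ⟨h2.1.symm, by rw [Sym2.eq_swap]; exact h2.2⟩

/-- The colour-stripping recursion: from the bi-hole-free property, G arrows P_n. -/
lemma prop_arrows {r n : ℕ} (hr : 2 ≤ r) (hn : 2 ≤ n) {N : ℕ} (hN : N = 3 * 2^r * n)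
    (G : SimpleGraph (Fin N))
    (PROP : ∀ S T : Finset (Fin N), S.card = n → T.card = n → Disjoint S T →
      ∃ u ∈ S, ∃ w ∈ T, G.Adj u w) :
    Arrows G (pathGraph n) r := by
  classical
  intro c
  by_contra hmono
  push_neg at hmono
  -- hmono : ∀ k f, Injective f → ∃ a b, Adj ∧ ¬(...)
  have noMono : ¬ ∃ (k : Fin r) (f : Fin n → Fin N), Function.Injective f ∧
      ∀ a b, (pathGraph n).Adj a b → G.Adj (f a) (f b) ∧ c s(f a, f b) = k := by
    rintro ⟨k, f, hf, h⟩
    obtain ⟨a, b, hab, hbad⟩ := hmono k f hf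
    exact hbad (h a b hab).1 (h a b hab).2
  -- main recursion
  have main : ∀ i, 1 ≤ i → i ≤ r → ∃ U W : Finset (Fin N), Disjoint U W ∧
      3 * 2^(r-i) * n + 2 ≤ U.card + 2*n ∧ 3 * 2^(r-i) * n + 2 ≤ W.card + 2*n ∧
      ∀ u ∈ U, ∀ w ∈ W, G.Adj u w → i ≤ (c s(u, w)).val := by
    intro i h1 hir
    induction i with
    | zero => omega
    | succ i ih =>
      rcases Nat.eq_or_lt_of_le h1 with h | h
      · -- base case i+1 = 1, i.e. i = 0
        have hi0 : i = 0 := by omega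
        subst hi0
        set H : SimpleGraph (Fin N) :=
          { Adj := fun x y => G.Adj x y ∧ c s(x, y) = ⟨0, by omega⟩
            symm := ⟨by
              intro x y ⟨h1, h2⟩
              exact ⟨h1.symm, by rwa [Sym2.eq_swap]⟩⟩
            loopless := ⟨fun x ⟨h1, _⟩ => G.loopless.irrefl x h1⟩ } with hH
        rcases dfs_lemma H Finset.univ n with ⟨l, hnd, hlen, hch, _⟩ | ⟨X, Y, _, _, hdisj, hcard, hbound, hnoedge⟩
        · exact absurd (list_to_mono G c ⟨0, by omega⟩ l hnd hlen hch) noMono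
        · refine ⟨X, Y, hdisj, ?_, ?_, ?_⟩
          · have hA : (Finset.univ : Finset (Fin N)).card = 3 * 2^r * n := by simp [hN]
            have hp : 3 * 2 ^ r * n = 2 * (3 * 2 ^ (r - (0 + 1)) * n) := by
              have e1 : (2:ℕ)^r = 2^(r-(0+1)) * 2 := by
                rw [← pow_succ]; congr 1; omega
              rw [e1]; ring
            omega
          · have hA : (Finset.univ : Finset (Fin N)).card = 3 * 2^r * n := by simp [hN]
            have hp : 3 * 2 ^ r * n = 2 * (3 * 2 ^ (r - (0 + 1)) * n) := by
              have e1 : (2:ℕ)^r = 2^(r-(0+1)) * 2 := by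
                rw [← pow_succ]; congr 1; omega
              rw [e1]; ring
            omega
          · intro u hu w hw hadj
            by_contra hc
            push_neg at hc
            have : (c s(u, w)).val = 0 := by omega
            exact hnoedge u hu w hw ⟨hadj, Fin.ext this⟩
      · -- inductive step: 1 ≤ i, i+1 ≤ r
        obtain ⟨U, W, hdisj, hU, hW, hcol⟩ := ih (by omega) (by omega)
        have hiltr : i < r := by omega
        set H : SimpleGraph (Fin N) :=
          { Adj := fun x y => (G.Adj x y ∧ (c s(x, y)).val = i) ∧
              ((x ∈ U ∧ y ∈ W) ∨ (y ∈ U ∧ x ∈ W))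
            symm := ⟨by
              intro x y ⟨⟨h1, h2⟩, h3⟩
              refine ⟨⟨h1.symm, by rwa [Sym2.eq_swap]⟩, by tauto⟩⟩
            loopless := ⟨fun x ⟨⟨h1, _⟩, _⟩ => G.loopless.irrefl x h1⟩ } with hH
        rcases dfs_lemma H (U ∪ W) n with ⟨l, hnd, hlen, hch, _⟩ | ⟨X, Y, hXA, hYA, hdisjXY, hcard, hbound, hnoedge⟩
        · refine absurd (list_to_mono G c ⟨i, hiltr⟩ l hnd hlen ?_) noMono
          exact hch.imp (fun a b ⟨⟨h1, h2⟩, _⟩ => ⟨h1, Fin.ext h2⟩)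
        · -- candidate analysis
          have hAcard : (U ∪ W).card = U.card + W.card := Finset.card_union_of_disjoint hdisj
          set a1 := (X ∩ U).card
          set b1 := (X ∩ W).card
          set a2 := (Y ∩ U).card
          set b2 := (Y ∩ W).card
          have hX1 : a1 + b1 = X.card := by
            rw [← Finset.card_union_of_disjoint]
            · congr 1
              rw [← Finset.inter_union_distrib_left]
              exact (Finset.inter_eq_left.2 hXA).symm ▸ rfl
            · exact Finset.disjoint_of_subset_left Finset.inter_subset_right
                (Finset.disjoint_of_subset_right Finset.inter_subset_right hdisj)
          have hY1 : a2 + b2 = Y.card := by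
            rw [← Finset.card_union_of_disjoint]
            · congr 1
              rw [← Finset.inter_union_distrib_left]
              exact (Finset.inter_eq_left.2 hYA).symm ▸ rfl
            · exact Finset.disjoint_of_subset_left Finset.inter_subset_right
                (Finset.disjoint_of_subset_right Finset.inter_subset_right hdisj)
          have ha : a1 + a2 ≤ U.card := by
            rw [← Finset.card_union_of_disjoint]
            · exact Finset.card_le_card (Finset.union_subset Finset.inter_subset_right Finset.inter_subset_right)
            · exact Finset.disjoint_of_subset_left Finset.inter_subset_left
                (Finset.disjoint_of_subset_right Finset.inter_subset_left hdisjXY)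
          have hb : b1 + b2 ≤ W.card := by
            rw [← Finset.card_union_of_disjoint]
            · exact Finset.card_le_card (Finset.union_subset Finset.inter_subset_right Finset.inter_subset_right)
            · exact Finset.disjoint_of_subset_left Finset.inter_subset_left
                (Finset.disjoint_of_subset_right Finset.inter_subset_left hdisjXY)
          -- colour property for both candidates
          have hcand1 : ∀ u ∈ X ∩ U, ∀ w ∈ Y ∩ W, G.Adj u w → i + 1 ≤ (c s(u, w)).val := by
            intro u hu w hw hadj
            have h1 := hcol u (Finset.mem_inter.1 hu).2 w (Finset.mem_inter.1 hw).2 hadj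
            rcases Nat.eq_or_lt_of_le h1 with h | h
            · exfalso
              exact hnoedge u (Finset.mem_inter.1 hu).1 w (Finset.mem_inter.1 hw).1
                ⟨⟨hadj, h.symm⟩, Or.inl ⟨(Finset.mem_inter.1 hu).2, (Finset.mem_inter.1 hw).2⟩⟩
            · omega
          have hcand2 : ∀ u ∈ Y ∩ U, ∀ w ∈ X ∩ W, G.Adj u w → i + 1 ≤ (c s(u, w)).val := by
            intro u hu w hw hadj
            have h1 := hcol u (Finset.mem_inter.1 hu).2 w (Finset.mem_inter.1 hw).2 hadj
            rcases Nat.eq_or_lt_of_le h1 with h | h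
            · exfalso
              exact hnoedge w (Finset.mem_inter.1 hw).1 u (Finset.mem_inter.1 hu).1
                ⟨⟨hadj.symm, by rw [Sym2.eq_swap]; exact h.symm⟩,
                  Or.inr ⟨(Finset.mem_inter.1 hu).2, (Finset.mem_inter.1 hw).2⟩⟩
            · omega
          -- numeric choice
          have hpow : 3 * 2^(r-i) * n = 2 * (3 * 2^(r-(i+1)) * n) := by
            have : r - i = (r - (i+1)) + 1 := by omega
            rw [this]; ring
          set t := 3 * 2^(r-(i+1)) * n
          have hchoice : (t + 2 ≤ a1 + 2*n ∧ t + 2 ≤ b2 + 2*n) ∨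
              (t + 2 ≤ a2 + 2*n ∧ t + 2 ≤ b1 + 2*n) := by
            by_contra hcon
            push_neg at hcon
            -- from hbound : U.card + W.card < 2 * X.card + n
            omega
          rcases hchoice with ⟨h1, h2⟩ | ⟨h1, h2⟩
          · refine ⟨X ∩ U, Y ∩ W, ?_, h1, h2, hcand1⟩
            exact Finset.disjoint_of_subset_left Finset.inter_subset_left
              (Finset.disjoint_of_subset_right Finset.inter_subset_left hdisjXY)
          · refine ⟨Y ∩ U, X ∩ W, ?_, h1, h2, hcand2⟩
            exact Finset.disjoint_of_subset_left Finset.inter_subset_left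
              (Finset.disjoint_of_subset_right Finset.inter_subset_left hdisjXY.symm)
  -- final contradiction
  obtain ⟨U, W, hdisj, hU, hW, hcol⟩ := main r (by omega) le_rfl
  simp only [Nat.sub_self, pow_zero] at hU hW
  obtain ⟨S, hSU, hScard⟩ := Finset.exists_subset_card_eq (s := U) (n := n) (by omega)
  obtain ⟨T, hTW, hTcard⟩ := Finset.exists_subset_card_eq (s := W) (n := n) (by omega)
  obtain ⟨u, hu, w, hw, hadj⟩ := PROP S T hScard hTcard
    (Finset.disjoint_of_subset_left hSU (Finset.disjoint_of_subset_right hTW hdisj))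
  have := hcol u (hSU hu) w (hTW hw) hadj
  have := (c s(u, w)).isLt
  omega



/-- descending ratio bound for binomial coefficients -/
lemma choose_ratio (p M : ℕ) (hM : 1 ≤ M) :
    ∀ K, M + K ≤ p → p^K * ((p - K).choose M) ≤ p.choose M * (p - M)^K := by
  intro K
  induction K with
  | zero => intro _; simp
  | succ K ih =>
    intro h
    have ihh := ih (by omega)
    have hpK : 1 ≤ p - K := by omega
    -- identity : C(p−K−1, M) * (p−K) = C(p−K, M) * (p−K−M)
    have hid : (p - (K+1)).choose M * (p - K) = (p - K).choose M * ((p - K) - M) := by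
      have e1 : p - (K+1) = (p - K) - 1 := by omega
      have e2 : (p - K) - 1 + 1 = p - K := by omega
      rw [e1]
      have := Nat.choose_mul_succ_eq ((p - K) - 1) M
      rw [e2] at this
      exact this
    -- key : p * C(p−K−1,M) ≤ (p−M) * C(p−K,M)
    have key : p * ((p - (K+1)).choose M) ≤ (p - M) * ((p - K).choose M) := by
      have hcancel : p * ((p - (K+1)).choose M) * (p - K) ≤ (p - M) * ((p - K).choose M) * (p - K) := by
        have e3 : p * ((p - (K+1)).choose M) * (p - K) = p * ((p - (K+1)).choose M * (p - K)) := by ring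
        rw [e3, hid]
        have hnum : p * ((p - K) - M) ≤ (p - M) * (p - K) := by
          have hMp : M ≤ p := by omega
          have hMpK : M ≤ p - K := by omega
          zify [hMp, hMpK, Nat.sub_le_sub_left, show K ≤ p by omega]
          nlinarith [Int.ofNat_nonneg M, Int.ofNat_nonneg K]
        calc p * ((p - K).choose M * ((p - K) - M)) = (p - K).choose M * (p * ((p - K) - M)) := by ring
          _ ≤ (p - K).choose M * ((p - M) * (p - K)) := Nat.mul_le_mul_left _ hnum
          _ = (p - M) * ((p - K).choose M) * (p - K) := by ring
      exact Nat.le_of_mul_le_mul_right hcancel (by omega)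
    calc p^(K+1) * ((p - (K+1)).choose M) = p^K * (p * ((p - (K+1)).choose M)) := by ring
      _ ≤ p^K * ((p - M) * ((p - K).choose M)) := Nat.mul_le_mul_left _ key
      _ = (p - M) * (p^K * ((p - K).choose M)) := by ring
      _ ≤ (p - M) * (p.choose M * (p - M)^K) := Nat.mul_le_mul_left _ ihh
      _ = p.choose M * (p - M)^(K+1) := by ring

/-- `n^n ≤ 4^n · n!` over the reals -/
lemma pow_self_le_fact (n : ℕ) : (n : ℝ)^n ≤ 4^n * (n.factorial : ℝ) := by
  induction n with
  | zero => simp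
  | succ n ih =>
    have h4 : ((n:ℝ)+1)^n ≤ 4 * (n:ℝ)^n := by
      rcases Nat.eq_zero_or_pos n with h | h
      · subst h; norm_num
      · have hn0 : (0:ℝ) < n := by exact_mod_cast h
        have h1 : (1 : ℝ) + 1/n ≤ Real.exp (1/n) := by
          have := Real.add_one_le_exp (1/(n:ℝ))
          linarith
        have h2 : ((1:ℝ) + 1/n)^n ≤ (Real.exp (1/n))^n := by
          apply pow_le_pow_left₀ (by positivity) h1
        have h3 : (Real.exp (1/(n:ℝ)))^n = Real.exp 1 := by
          rw [← Real.exp_nat_mul]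
          congr 1
          field_simp
        have he : Real.exp 1 ≤ 4 := by
          have := Real.exp_one_lt_d9
          linarith
        have h5 : ((n:ℝ)+1)^n = ((1:ℝ) + 1/n)^n * (n:ℝ)^n := by
          rw [← mul_pow]
          congr 1
          field_simp
        rw [h5]
        calc ((1:ℝ) + 1/n)^n * (n:ℝ)^n ≤ Real.exp 1 * (n:ℝ)^n := by
              apply mul_le_mul_of_nonneg_right _ (by positivity)
              calc ((1:ℝ) + 1/n)^n ≤ (Real.exp (1/n))^n := h2
                _ = Real.exp 1 := h3
          _ ≤ 4 * (n:ℝ)^n := by nlinarith [pow_nonneg (le_of_lt hn0) n]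
    have : ((n:ℝ)+1)^(n+1) = ((n:ℝ)+1) * ((n:ℝ)+1)^n := by ring
    push_cast
    rw [this]
    calc ((n:ℝ)+1) * ((n:ℝ)+1)^n ≤ ((n:ℝ)+1) * (4 * (n:ℝ)^n) := by
          apply mul_le_mul_of_nonneg_left h4 (by positivity)
      _ ≤ ((n:ℝ)+1) * (4 * (4^n * (n.factorial : ℝ))) := by
          apply mul_le_mul_of_nonneg_left _ (by positivity)
          apply mul_le_mul_of_nonneg_left ih (by norm_num)
      _ = 4^(n+1) * (((n:ℝ)+1) * (n.factorial : ℝ)) := by ring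
      _ = 4^(n+1) * ((n+1).factorial : ℝ) := by
          congr 1
          rw [Nat.factorial_succ]
          push_cast
          ring

/-- binomial bound : C(3·2^r·n, n) ≤ (12·2^r)^n -/
lemma choose_bound (r n : ℕ) (hn : 1 ≤ n) :
    ((3*2^r*n).choose n : ℝ) ≤ (12 * 2^r : ℝ)^n := by
  set N := 3*2^r*n with hN
  have h1 : (N.choose n) * n.factorial ≤ N^n := by
    have := Nat.descFactorial_le_pow N n
    rw [Nat.descFactorial_eq_factorial_mul_choose] at this
    calc (N.choose n) * n.factorial = n.factorial * N.choose n := by ring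
      _ ≤ N^n := this
  have h1' : ((N.choose n : ℝ)) * (n.factorial : ℝ) ≤ (N:ℝ)^n := by exact_mod_cast h1
  have hnn : (0:ℝ) < (n:ℝ)^n := by positivity
  have key : ((N.choose n : ℝ)) * (n:ℝ)^n ≤ (12 * 2^r : ℝ)^n * (n:ℝ)^n := by
    calc ((N.choose n : ℝ)) * (n:ℝ)^n ≤ ((N.choose n : ℝ)) * (4^n * (n.factorial:ℝ)) := by
          apply mul_le_mul_of_nonneg_left (pow_self_le_fact n) (by positivity)
      _ = 4^n * (((N.choose n : ℝ)) * (n.factorial:ℝ)) := by ring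
      _ ≤ 4^n * (N:ℝ)^n := by
          apply mul_le_mul_of_nonneg_left h1' (by positivity)
      _ = (4 * (N:ℝ))^n := by rw [mul_pow]
      _ = (12 * 2^r : ℝ)^n * (n:ℝ)^n := by
          rw [← mul_pow]
          congr 1
          rw [hN]
          push_cast
          ring
  exact le_of_mul_le_mul_right key hnn

lemma two_mul_choose_two (N : ℕ) (hN1 : 1 ≤ N) : 2 * N.choose 2 = N * (N - 1) := by
  rw [Nat.choose_two_right]
  rw [Nat.mul_div_cancel']
  have : N * (N-1) = (N-1) * ((N-1)+1) := by
    rw [Nat.sub_add_cancel hN1]; ring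
  rw [this]
  exact even_iff_two_dvd.1 (Nat.even_mul_succ_self _)

lemma pow_two_four (r : ℕ) : 2^r * 2^r = 4^r := by
  rw [← pow_add, ← two_mul, pow_mul]; norm_num

lemma f3_lemma (r n : ℕ) (hr : 2 ≤ r) (hn : 25*r*r ≤ n) :
    33*r*4^r*n + n*n ≤ (3*2^r*n).choose 2 := by
  have hn1 : 1 ≤ n := by nlinarith
  have h4r := pow_two_four r
  have hN1 : 1 ≤ 3*2^r*n := by
    have h0 : 0 < 3*2^r*n := by
      apply Nat.mul_pos (Nat.mul_pos (by norm_num) (by positivity)) (by omega)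
    omega
  have h2p := two_mul_choose_two (3*2^r*n) hN1
  set N := 3*2^r*n with hN
  have h2 : 2*(33*r*4^r*n + n*n) ≤ 2 * N.choose 2 := by
    rw [h2p]
    have hNsub : N * (N - 1) + N = N * N := by
      have e1 : N - 1 + 1 = N := by omega
      calc N * (N-1) + N = N * ((N-1)+1) := by ring
        _ = N * N := by rw [e1]
    have hNN : N * N = 9 * (4^r * (n*n)) := by rw [hN, ← h4r]; ring
    have hNle : N ≤ 3 * (4^r * (n*n)) := by
      have h0 : 0 < 2^r*n := by positivity
      have h1 : 2^r*n ≤ (2^r*n)*(2^r*n) := Nat.le_mul_of_pos_left _ h0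
      calc N = 3*(2^r*n) := by rw [hN]; ring
        _ ≤ 3*((2^r*n)*(2^r*n)) := Nat.mul_le_mul_left _ h1
        _ = 3*(4^r*(n*n)) := by rw [← h4r]; ring
    have h66 : 66 * r ≤ 5 * n := by
      have hrr : r ≤ r*r := Nat.le_mul_of_pos_left _ (by omega)
      have hn' : 25*(r*r) ≤ n := by
        calc 25*(r*r) = 25*r*r := by ring
          _ ≤ n := hn
      calc 66*r ≤ 66*(r*r) := Nat.mul_le_mul_left _ hrr
        _ ≤ 5*(25*(r*r)) := by omega
        _ ≤ 5*n := by omega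
    have h2' : (66*r)*(4^r*n) ≤ (5*n)*(4^r*n) := Nat.mul_le_mul_right _ h66
    have h3 : 2*(n*n) ≤ 4^r*(n*n) := by
      apply Nat.mul_le_mul_right
      calc (2:ℕ) ≤ 4^1 := by norm_num
        _ ≤ 4^r := Nat.pow_le_pow_right (by norm_num) (by omega)
    have hMle : 2*(33*r*4^r*n) = (66*r)*(4^r*n) := by ring
    have h5' : (5*n)*(4^r*n) = 5*(4^r*(n*n)) := by ring
    omega
  omega

/-- core inequality : (C(N,n))² (p−M)^{n²} < p^{n²} -/
lemma core_ineq (r n : ℕ) (hr : 2 ≤ r) (hn : 25*r*r ≤ n) :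
    ((3*2^r*n).choose n)^2 * (((3*2^r*n).choose 2) - 33*r*4^r*n)^(n*n)
      < ((3*2^r*n).choose 2)^(n*n) := by
  have hn1 : 1 ≤ n := by nlinarith
  have hnn1 : 1 ≤ n*n := by nlinarith
  have h4r := pow_two_four r
  have hN1 : 1 ≤ 3*2^r*n := by
    have h0 : 0 < 3*2^r*n := by
      apply Nat.mul_pos (Nat.mul_pos (by norm_num) (by positivity)) (by omega)
    omega
  have h2p := two_mul_choose_two (3*2^r*n) hN1
  have f3' := f3_lemma r n hr hn
  have hcb := choose_bound r n hn1
  -- q, m decomposition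
  have h7r : 0 < 7*r := by omega
  have hqm : 7*r*(n/(7*r)) + n % (7*r) = n := by
    rw [mul_comm]; exact Nat.div_add_mod' n (7*r)
  have hmlt : n % (7*r) < 7*r := Nat.mod_lt n h7r
  -- generalize everything
  set Q := n / (7*r) with hQ
  set m := n % (7*r) with hm
  set N := 3*2^r*n with hN
  set M := 33*r*4^r*n with hM
  set p := N.choose 2 with hp
  set C := N.choose n with hC
  clear_value Q m p C
  clear hQ hm hp
  -- ℕ facts
  have hq25 : 25*r < 7*(Q+1) := by
    by_contra hcon
    push_neg at hcon
    have h1 : r*(7*(Q+1)) ≤ r*(25*r) := Nat.mul_le_mul_left r hcon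
    have e : r*(7*(Q+1)) = 7*r*Q + 7*r := by ring
    have e2 : r*(25*r) = 25*r*r := by ring
    rw [e, e2] at h1
    omega
  set k := Q + 1 with hk
  have hkpos : 0 < k := by omega
  have f1 : k * (7*r-2) ≤ n := by
    have h2q : 7*r-2 ≤ 2*Q := by omega
    zify [show 2 ≤ 7*r by omega] at h2q ⊢
    have hqm' : (7:ℤ)*r*Q + m = n := by exact_mod_cast hqm
    have hm0 : (0:ℤ) ≤ (m:ℤ) := by positivity
    push_cast
    nlinarith [hqm', hm0, h2q]
  have f3 : M + n*n ≤ p := f3'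
  have f2 : p ≤ M * (k+1) := by
    have h9 : 9 * n ≤ 66 * r * (Q+2) := by
      have e : 66*r*(Q+2) = 9*(7*r*Q) + 3*r*Q + 132*r := by ring
      have h1 : 3*r*Q ≥ 0 := by positivity
      have h2 : 9*m ≤ 63*r := by omega
      have h3 : 9*n = 9*(7*r*Q) + 9*m := by omega
      omega
    have h2 : 2*p ≤ 2*(M*(k+1)) := by
      rw [h2p]
      have hNN : N * (N-1) ≤ (9*n) * (4^r*n) := by
        calc N * (N-1) ≤ N * N := Nat.mul_le_mul_left _ (Nat.sub_le _ _)
          _ = (9*n) * (4^r*n) := by rw [hN, ← h4r]; ring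
      have e2 : 2*(M*(k+1)) = (66*r*(Q+2)) * (4^r * n) := by
        rw [hM, hk]; ring
      calc N*(N-1) ≤ (9*n) * (4^r*n) := hNN
        _ ≤ (66*r*(Q+2)) * (4^r*n) := Nat.mul_le_mul_right _ h9
        _ = 2*(M*(k+1)) := e2.symm
    omega
  have hpM : M < p := by omega
  have hfrac_nat : (k+1)*(p-M) ≤ k*p := by
    zify [le_of_lt hpM]
    nlinarith [f2]
  -- real chain
  set A : ℝ := 1 + 1/(k:ℝ) with hA
  have hkR : (0:ℝ) < (k:ℝ) := by exact_mod_cast hkpos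
  have hA1 : (1:ℝ) ≤ A := by
    rw [hA]
    have : (0:ℝ) ≤ 1/(k:ℝ) := by positivity
    linarith
  have hPM : (0:ℝ) < ((p - M : ℕ):ℝ) := by
    have : 0 < p - M := by omega
    exact_mod_cast this
  have h1 : A ≤ (p:ℝ)/((p-M:ℕ):ℝ) := by
    rw [hA, show (1:ℝ) + 1/(k:ℝ) = ((k:ℝ)+1)/(k:ℝ) by field_simp]
    rw [div_le_div_iff₀ hkR hPM]
    have hc : ((k:ℝ)+1) * ((p-M:ℕ):ℝ) ≤ (k:ℝ)*(p:ℝ) := by exact_mod_cast hfrac_nat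
    linarith
  have h2 : (2:ℝ) ≤ A^k := by
    have hple := one_add_mul_le_pow (a := 1/(k:ℝ)) (le_trans (by norm_num : (-2:ℝ) ≤ 0) (by positivity)) k
    rw [hA]
    have hk1 : (k:ℝ) * (1/(k:ℝ)) = 1 := by field_simp
    calc (2:ℝ) = 1 + (k:ℝ) * (1/(k:ℝ)) := by rw [hk1]; norm_num
      _ ≤ (1 + 1/(k:ℝ))^k := hple
  have h3 : (2:ℝ)^(7*r-2) ≤ A^n := by
    calc (2:ℝ)^(7*r-2) ≤ (A^k)^(7*r-2) := pow_le_pow_left₀ (by norm_num) h2 _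
      _ = A^(k*(7*r-2)) := by rw [← pow_mul]
      _ ≤ A^n := pow_le_pow_right₀ hA1 f1
  have h4 : ((C:ℝ))^2 ≤ ((144 * 4^r : ℝ))^n := by
    calc ((C:ℝ))^2 ≤ ((12 * 2^r : ℝ)^n)^2 := by
          apply pow_le_pow_left₀ (by positivity) hcb
      _ = ((12 * 2^r : ℝ)^2)^n := by rw [← pow_mul, mul_comm n 2, pow_mul]
      _ = ((144 * 4^r : ℝ))^n := by
          congr 1
          have : ((4:ℝ))^r = ((2:ℝ)^r)^2 := by
            rw [← pow_mul, mul_comm, pow_mul]; norm_num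
          rw [this]; ring
  have h5 : ((144:ℝ) * 4^r) < 2^(7*r-2) := by
    have hnat : (144:ℕ) * 4^r < 2^(7*r-2) := by
      have e : 7*r-2 = (5*r-2) + 2*r := by omega
      have e2 : (2:ℕ)^(2*r) = 4^r := by rw [pow_mul]; norm_num
      have e3 : (256:ℕ) ≤ 2^(5*r-2) := by
        calc (256:ℕ) = 2^8 := by norm_num
          _ ≤ 2^(5*r-2) := Nat.pow_le_pow_right (by norm_num) (by omega)
      have h4pos : 0 < (4:ℕ)^r := by positivity
      calc (144:ℕ) * 4^r < 256 * 4^r := by omega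
        _ ≤ 2^(5*r-2) * 4^r := Nat.mul_le_mul_right _ e3
        _ = 2^(5*r-2) * 2^(2*r) := by rw [e2]
        _ = 2^(7*r-2) := by rw [← pow_add, ← e]
    exact_mod_cast hnat
  have hmain : ((C:ℝ))^2 < ((p:ℝ)/((p-M:ℕ):ℝ))^(n*n) := by
    calc ((C:ℝ))^2 ≤ ((144 * 4^r : ℝ))^n := h4
      _ < ((2:ℝ)^(7*r-2))^n := by
          apply pow_lt_pow_left₀ h5 (by positivity) (by omega)
      _ ≤ (A^n)^n := pow_le_pow_left₀ (by positivity) h3 _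
      _ = A^(n*n) := by rw [← pow_mul]
      _ ≤ ((p:ℝ)/((p-M:ℕ):ℝ))^(n*n) := pow_le_pow_left₀ (by linarith) h1 _
  have hfinal : ((C:ℝ))^2 * ((p-M:ℕ):ℝ)^(n*n) < (p:ℝ)^(n*n) := by
    have hPMpow : (0:ℝ) < ((p-M:ℕ):ℝ)^(n*n) := by positivity
    calc ((C:ℝ))^2 * ((p-M:ℕ):ℝ)^(n*n)
        < ((p:ℝ)/((p-M:ℕ):ℝ))^(n*n) * ((p-M:ℕ):ℝ)^(n*n) :=
          mul_lt_mul_of_pos_right hmain hPMpow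
      _ = (p:ℝ)^(n*n) := by
          rw [div_pow, div_mul_cancel₀]
          positivity
  exact_mod_cast hfinal

/-- Main numeric inequality -/
lemma numeric_main (r n : ℕ) (hr : 2 ≤ r) (hn : 25*r*r ≤ n) :
    (((3*2^r*n).choose n))^2 * ((((3*2^r*n).choose 2) - n*n).choose (33*r*4^r*n))
      < ((3*2^r*n).choose 2).choose (33*r*4^r*n) := by
  have hn1 : 1 ≤ n := by nlinarith
  have hnn1 : 1 ≤ n*n := by nlinarith
  have hcore := core_ineq r n hr hn
  have f3 := f3_lemma r n hr hn
  set N := 3*2^r*n with hN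
  set M := 33*r*4^r*n with hM
  set p := N.choose 2 with hp
  set C := N.choose n with hC
  clear_value p C
  have hM1 : 1 ≤ M := by
    have h0 : 0 < M := by
      rw [hM]
      apply Nat.mul_pos (Nat.mul_pos (Nat.mul_pos (by norm_num) (by omega)) (by positivity)) (by omega)
    omega
  have hratio := choose_ratio p M hM1 (n*n) (by omega)
  have hchoosepos : 0 < (p - (n*n)).choose M := Nat.choose_pos (by omega)
  have step1 : C^2 * ((p - n*n).choose M) * (p - M)^(n*n)
      < p^(n*n) * ((p - n*n).choose M) := by
    calc C^2 * ((p - n*n).choose M) * (p - M)^(n*n)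
        = (C^2 * (p - M)^(n*n)) * ((p - n*n).choose M) := by ring
      _ < p^(n*n) * ((p - n*n).choose M) := (Nat.mul_lt_mul_right hchoosepos).2 hcore
  have hfin : C^2 * ((p - n*n).choose M) * (p - M)^(n*n)
      < p.choose M * (p - M)^(n*n) := lt_of_lt_of_le step1 hratio
  have hPMpos : 0 < (p - M)^(n*n) := by
    have : 0 < p - M := by omega
    positivity
  exact Nat.lt_of_mul_lt_mul_right hfin

lemma exists_good_graph (r n : ℕ) (hr : 2 ≤ r) (hn : 25*r*r ≤ n) :
    ∃ G : SimpleGraph (Fin (3*2^r*n)), G.edgeSet.ncard = 33*r*4^r*n ∧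
      (∀ S T : Finset (Fin (3*2^r*n)), S.card = n → T.card = n → Disjoint S T →
        ∃ u ∈ S, ∃ w ∈ T, G.Adj u w) := by
  classical
  set N := 3*2^r*n with hNdef
  set M := 33*r*4^r*n with hMdef
  set P : Finset (Sym2 (Fin N)) := (⊤ : SimpleGraph (Fin N)).edgeFinset with hP
  have hPcard : P.card = N.choose 2 := by
    rw [hP, card_edgeFinset_top_eq_card_choose_two]; simp
  set Ω := P.powersetCard M with hΩ
  have hΩcard : Ω.card = (N.choose 2).choose M := by
    rw [hΩ, Finset.card_powersetCard, hPcard]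
  set pairs : Finset (Finset (Fin N) × Finset (Fin N)) :=
    ((Finset.univ.powersetCard n) ×ˢ (Finset.univ.powersetCard n)).filter
      (fun q => Disjoint q.1 q.2) with hpairs
  set B : Finset (Fin N) × Finset (Fin N) → Finset (Sym2 (Fin N)) :=
    fun q => (q.1 ×ˢ q.2).image (fun x => s(x.1, x.2)) with hB
  have hBsub : ∀ q ∈ pairs, B q ⊆ P := by
    intro q hq e he
    obtain ⟨x, hx, hxe⟩ := Finset.mem_image.1 he
    have hd : Disjoint q.1 q.2 := (Finset.mem_filter.1 hq).2
    have hx1 : x.1 ∈ q.1 := (Finset.mem_product.1 hx).1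
    have hx2 : x.2 ∈ q.2 := (Finset.mem_product.1 hx).2
    have hne : x.1 ≠ x.2 := by
      intro h
      exact Finset.disjoint_left.1 hd hx1 (h ▸ hx2)
    rw [hP]
    simp only [mem_edgeFinset, edgeSet_top, Set.mem_setOf_eq]
    rw [← hxe]
    simpa using hne
  have hBcard : ∀ q ∈ pairs, (B q).card = n*n := by
    intro q hq
    have hd : Disjoint q.1 q.2 := (Finset.mem_filter.1 hq).2
    have h1 : q.1.card = n := Finset.mem_powersetCard.1 ((Finset.mem_product.1 (Finset.mem_filter.1 hq).1).1) |>.2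
    have h2 : q.2.card = n := Finset.mem_powersetCard.1 ((Finset.mem_product.1 (Finset.mem_filter.1 hq).1).2) |>.2
    rw [hB]
    rw [Finset.card_image_of_injOn, Finset.card_product, h1, h2]
    intro x hx y hy hxy
    simp only [Finset.mem_coe, Finset.mem_product] at hx hy
    simp only [Sym2.eq, Sym2.rel_iff', Prod.mk.injEq, Prod.swap_prod_mk] at hxy
    rcases hxy with ⟨h1', h2'⟩ | ⟨h1', h2'⟩
    · exact Prod.ext h1' h2'
    · exfalso
      exact Finset.disjoint_left.1 hd hx.1 (h1' ▸ hy.2)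
  set bad := Ω.filter (fun E => ∃ q ∈ pairs, E ∩ B q = ∅) with hbad
  have hbadsub : bad ⊆ pairs.biUnion (fun q => Ω.filter (fun E => E ∩ B q = ∅)) := by
    intro E hE
    obtain ⟨hEΩ, q, hq, hqE⟩ := Finset.mem_filter.1 hE
    exact Finset.mem_biUnion.2 ⟨q, hq, Finset.mem_filter.2 ⟨hEΩ, hqE⟩⟩
  have hfiltcard : ∀ q ∈ pairs,
      (Ω.filter (fun E => E ∩ B q = ∅)).card = (N.choose 2 - n*n).choose M := by
    intro q hq
    have : Ω.filter (fun E => E ∩ B q = ∅) = (P \ B q).powersetCard M := by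
      ext E
      simp only [Finset.mem_filter, hΩ, Finset.mem_powersetCard]
      constructor
      · rintro ⟨⟨hEP, hEM⟩, hEB⟩
        refine ⟨fun x hx => Finset.mem_sdiff.2 ⟨hEP hx, fun hxB => ?_⟩, hEM⟩
        have : x ∈ E ∩ B q := Finset.mem_inter.2 ⟨hx, hxB⟩
        rw [hEB] at this
        exact absurd this (Finset.notMem_empty x)
      · rintro ⟨hEPB, hEM⟩
        refine ⟨⟨fun x hx => (Finset.mem_sdiff.1 (hEPB hx)).1, hEM⟩, ?_⟩
        ext x
        simp only [Finset.mem_inter, Finset.notMem_empty, iff_false, not_and]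
        intro hx hxB
        exact (Finset.mem_sdiff.1 (hEPB hx)).2 hxB
    rw [this, Finset.card_powersetCard, Finset.card_sdiff_of_subset (hBsub q hq), hPcard, hBcard q hq]
  have hpairscard : pairs.card ≤ (N.choose n)^2 := by
    have h1 : pairs.card ≤ (((Finset.univ : Finset (Fin N)).powersetCard n) ×ˢ
        ((Finset.univ : Finset (Fin N)).powersetCard n)).card := Finset.card_filter_le _ _
    rw [Finset.card_product, Finset.card_powersetCard, Finset.card_univ, Fintype.card_fin] at h1
    simpa [sq] using h1
  have hbadcard : bad.card < Ω.card := by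
    calc bad.card ≤ (pairs.biUnion (fun q => Ω.filter (fun E => E ∩ B q = ∅))).card :=
          Finset.card_le_card hbadsub
      _ ≤ ∑ q ∈ pairs, (Ω.filter (fun E => E ∩ B q = ∅)).card := Finset.card_biUnion_le
      _ = ∑ q ∈ pairs, (N.choose 2 - n*n).choose M := Finset.sum_congr rfl hfiltcard
      _ = pairs.card * ((N.choose 2 - n*n).choose M) := by rw [Finset.sum_const, smul_eq_mul]
      _ ≤ (N.choose n)^2 * ((N.choose 2 - n*n).choose M) := by
          exact Nat.mul_le_mul_right _ hpairscard
      _ < (N.choose 2).choose M := numeric_main r n hr hn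
      _ = Ω.card := hΩcard.symm
  have hex : (Ω \ bad).Nonempty := by
    rw [Finset.sdiff_nonempty]
    intro hsub
    have := Finset.card_le_card hsub
    omega
  obtain ⟨E, hE'⟩ := hex
  obtain ⟨hEΩ, hEbad⟩ := Finset.mem_sdiff.1 hE' 
  have hEP : E ⊆ P := (Finset.mem_powersetCard.1 hEΩ).1
  have hEM : E.card = M := (Finset.mem_powersetCard.1 hEΩ).2
  refine ⟨SimpleGraph.fromEdgeSet ↑E, ?_, ?_⟩
  · rw [SimpleGraph.edgeSet_fromEdgeSet]
    have : (↑E : Set (Sym2 (Fin N))) \ {e | e.IsDiag} = ↑E := by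
      ext e
      simp only [Set.mem_diff, Finset.mem_coe, Set.mem_setOf_eq, and_iff_left_iff_imp]
      intro he
      have := hEP he
      rw [hP] at this
      simp only [mem_edgeFinset, edgeSet_top, Set.mem_setOf_eq] at this
      exact this
    rw [show (↑E \ Sym2.diagSet : Set (Sym2 (Fin N))) = ↑E from this, Set.ncard_coe_finset, hEM]
  · intro S T hS hT hST
    have hqp : (S, T) ∈ pairs := by
      rw [hpairs]
      refine Finset.mem_filter.2 ⟨Finset.mem_product.2 ⟨?_, ?_⟩, hST⟩
      · exact Finset.mem_powersetCard.2 ⟨Finset.subset_univ _, hS⟩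
      · exact Finset.mem_powersetCard.2 ⟨Finset.subset_univ _, hT⟩
    have : ¬ (E ∩ B (S, T) = ∅) := by
      intro h
      exact hEbad (Finset.mem_filter.2 ⟨hEΩ, (S, T), hqp, h⟩)
    obtain ⟨e, he⟩ := Finset.nonempty_iff_ne_empty.2 this
    obtain ⟨heE, heB⟩ := Finset.mem_inter.1 he
    obtain ⟨x, hx, hxe⟩ := Finset.mem_image.1 heB
    refine ⟨x.1, (Finset.mem_product.1 hx).1, x.2, (Finset.mem_product.1 hx).2, ?_⟩
    rw [SimpleGraph.fromEdgeSet_adj]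
    refine ⟨by rw [hxe]; exact heE, ?_⟩
    intro h
    exact Finset.disjoint_left.1 hST (Finset.mem_product.1 hx).1 (h ▸ (Finset.mem_product.1 hx).2)

/-- For every integer `r ≥ 2` and all sufficiently large `n`,
`R̂(Pₙ, r) ≤ 33 · r · 4^r · n`. -/
theorem sizeRamsey_path_upper_exponential (r : ℕ) (hr : 2 ≤ r) :
    ∃ N : ℕ, ∀ n : ℕ, N ≤ n →
      sizeRamsey (pathGraph n) r ≤ 33 * r * 4 ^ r * n := by
  refine ⟨25*r*r, fun n hn => ?_⟩
  obtain ⟨G, hGcard, hPROP⟩ := exists_good_graph r n hr hn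
  have hn2 : 2 ≤ n := by nlinarith
  have harrows := prop_arrows hr hn2 rfl G hPROP
  exact Nat.sInf_le ⟨3*2^r*n, G, hGcard, harrows⟩
end

section
/- There exists a constant c > 0 such that for every integer n ≥ 1, the 2-colour size-Ramsey number of the path on n vertices satisfies R̂(P_n, 2) ≥ 5n/2 − c. -/
open SimpleGraph

section Existence

open List


private lemma fin2_ne_zero {x : Fin 2} (h : x ≠ 0) : x = 1 := by omega
private lemma fin2_ne_one {x : Fin 2} (h : x ≠ 1) : x = 0 := by omega

lemma exists_two_mono_lists {M : ℕ} (c : Sym2 (Fin M) → Fin 2) (S : Finset (Fin M)) :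
    ∃ L0 L1 : List (Fin M), (↑(L0 ++ L1) : Multiset (Fin M)) = S.val ∧
      L0.Chain' (fun x y => c s(x, y) = 0) ∧ L1.Chain' (fun x y => c s(x, y) = 1) := by
  classical
  induction S using Finset.induction_on with
  | empty => exact ⟨[], [], by simp, List.isChain_nil, List.isChain_nil⟩
  | @insert a S ha ih =>
    obtain ⟨L0, L1, hms, h0, h1⟩ := ih
    have hval : (insert a S).val = ↑(a :: (L0 ++ L1)) := by
      rw [Finset.insert_val_of_notMem ha, ← hms]; rfl
    have key : ∀ L0' L1' : List (Fin M), (L0' ++ L1') ~ (a :: (L0 ++ L1)) →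
        L0'.Chain' (fun x y => c s(x, y) = 0) → L1'.Chain' (fun x y => c s(x, y) = 1) →
        ∃ A B : List (Fin M), (↑(A ++ B) : Multiset (Fin M)) = (insert a S).val ∧
          A.Chain' (fun x y => c s(x, y) = 0) ∧ B.Chain' (fun x y => c s(x, y) = 1) := by
      intro L0' L1' hp c0 c1
      exact ⟨L0', L1', by rw [hval]; exact Multiset.coe_eq_coe.2 hp, c0, c1⟩
    match L0, L1, hms, h0, h1 with
    | [], L1, hms, h0, h1 =>
      exact key [a] L1 (by simp) (List.isChain_singleton _) h1
    | h0l :: t0, [], hms, h0, h1 =>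
      by_cases hc : c s(a, h0l) = 0
      · exact key (a :: h0l :: t0) [] (by simp) (List.isChain_cons_cons.2 ⟨hc, h0⟩) List.isChain_nil
      · refine key (h0l :: t0) [a] ?_ h0 (List.isChain_singleton _)
        refine List.perm_iff_count.2 fun b => ?_
        simp [List.count_append, List.count_cons]; ring
    | h0l :: t0, h1l :: t1, hms, h0, h1 =>
      by_cases hc0 : c s(a, h0l) = 0
      · exact key (a :: h0l :: t0) (h1l :: t1) (by simp) (List.isChain_cons_cons.2 ⟨hc0, h0⟩) h1
      by_cases hc1 : c s(a, h1l) = 1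
      · refine key (h0l :: t0) (a :: h1l :: t1) ?_ h0 (List.isChain_cons_cons.2 ⟨hc1, h1⟩)
        refine List.perm_iff_count.2 fun b => ?_
        simp [List.count_append, List.count_cons]; ring
      have hc0' : c s(a, h0l) = 1 := fin2_ne_zero hc0
      have hc1' : c s(a, h1l) = 0 := fin2_ne_one hc1
      by_cases he : c s(h0l, h1l) = 0
      · have he' : c s(h1l, h0l) = 0 := by rwa [Sym2.eq_swap]
        refine key (a :: h1l :: h0l :: t0) t1 ?_
          (List.isChain_cons_cons.2 ⟨hc1', List.isChain_cons_cons.2 ⟨he', h0⟩⟩) h1.tail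
        refine List.perm_iff_count.2 fun b => ?_
        simp [List.count_append, List.count_cons]; ring
      · have he' : c s(h0l, h1l) = 1 := fin2_ne_zero he
        refine key t0 (a :: h0l :: h1l :: t1) ?_ h0.tail
          (List.isChain_cons_cons.2 ⟨hc0', List.isChain_cons_cons.2 ⟨he', h1⟩⟩)
        refine List.perm_iff_count.2 fun b => ?_
        simp [List.count_append, List.count_cons]; ring

lemma top_arrows_path (n : ℕ) : Arrows (⊤ : SimpleGraph (Fin (2 * n))) (pathGraph n) 2 := by
  intro c
  obtain ⟨L0, L1, hms, h0, h1⟩ := exists_two_mono_lists c Finset.univ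
  have hnd : (L0 ++ L1).Nodup := by
    have h2 : (Finset.univ : Finset (Fin (2 * n))).val.Nodup := Finset.univ.nodup
    rw [← hms] at h2
    exact h2
  have hlen : L0.length + L1.length = 2 * n := by
    have := congrArg Multiset.card hms
    simpa using this
  have main : ∀ (L : List (Fin (2 * n))) (k : Fin 2), L.Nodup → n ≤ L.length →
      L.Chain' (fun x y => c s(x, y) = k) →
      ∃ (k' : Fin 2) (f : Fin n → Fin (2 * n)), Function.Injective f ∧
        ∀ a b, (pathGraph n).Adj a b → (⊤ : SimpleGraph (Fin (2*n))).Adj (f a) (f b)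
          ∧ c s(f a, f b) = k' := by
    intro L k hLnd hn hch
    refine ⟨k, fun i => L.get ⟨i.1, lt_of_lt_of_le i.2 hn⟩, ?_, ?_⟩
    · intro i j hij
      have h3 := List.nodup_iff_injective_get.1 hLnd hij
      simp only [Fin.mk.injEq] at h3
      exact Fin.ext h3
    · have hchain := List.isChain_iff_getElem.1 hch
      have step : ∀ (i j : Fin n), i.1 + 1 = j.1 →
          (⊤ : SimpleGraph (Fin (2*n))).Adj (L.get ⟨i.1, lt_of_lt_of_le i.2 hn⟩)
            (L.get ⟨j.1, lt_of_lt_of_le j.2 hn⟩) ∧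
          c s(L.get ⟨i.1, lt_of_lt_of_le i.2 hn⟩, L.get ⟨j.1, lt_of_lt_of_le j.2 hn⟩) = k := by
        intro i j hij
        have hj2 := j.2
        have hi : i.1 < L.length - 1 := by omega
        have hcc := hchain i.1 (by omega)
        constructor
        · simp only [top_adj]
          intro heq
          have := List.nodup_iff_injective_get.1 hLnd heq
          simp only [Fin.mk.injEq] at this
          omega
        · have hargs : (⟨j.1, lt_of_lt_of_le j.2 hn⟩ : Fin L.length)
              = ⟨i.1 + 1, by omega⟩ := Fin.ext (by simp; omega)
          rw [hargs]
          exact hcc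
      intro a b hab
      rcases pathGraph_adj.1 hab with hab | hab
      · exact step a b hab
      · obtain ⟨h1, h2⟩ := step b a hab
        exact ⟨h1.symm, by rwa [Sym2.eq_swap]⟩
  have : n ≤ L0.length ∨ n ≤ L1.length := by omega
  rcases this with h | h
  · exact main L0 0 (hnd.sublist (List.sublist_append_left _ _)) h h0
  · exact main L1 1 (hnd.sublist (List.sublist_append_right _ _)) h h1

end Existence

namespace SRLB

open Finset

variable {N : ℕ} (G : SimpleGraph (Fin N))

noncomputable instance : DecidableRel G.Adj := fun _ _ => Classical.propDecidable _
noncomputable instance : ∀ v w : Fin N, Decidable (G.Reachable v w) :=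
  fun _ _ => Classical.propDecidable _

/-- representative (minimum) of the connected component of `v` -/
noncomputable def rep (v : Fin N) : Fin N :=
  (Finset.univ.filter (fun w => G.Reachable v w)).min'
    ⟨v, Finset.mem_filter.2 ⟨Finset.mem_univ v, Reachable.refl v⟩⟩

lemma reach_rep (v : Fin N) : G.Reachable v (rep G v) := by
  have := Finset.min'_mem (Finset.univ.filter (fun w => G.Reachable v w))
    ⟨v, Finset.mem_filter.2 ⟨Finset.mem_univ v, Reachable.refl v⟩⟩
  exact (Finset.mem_filter.1 this).2

lemma rep_eq_of_reachable {v w : Fin N} (h : G.Reachable v w) : rep G v = rep G w := by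
  unfold rep
  congr 1
  ext x
  simp only [Finset.mem_filter, Finset.mem_univ, true_and]
  exact ⟨fun hv => h.symm.trans hv, fun hw => h.trans hw⟩

lemma rep_eq_iff_reachable {v w : Fin N} : rep G v = rep G w ↔ G.Reachable v w := by
  refine ⟨fun h => ?_, rep_eq_of_reachable G⟩
  have h1 := reach_rep G v
  have h2 := reach_rep G w
  rw [h] at h1
  exact h1.trans h2.symm

lemma rep_rep (v : Fin N) : rep G (rep G v) = rep G v :=
  (rep_eq_of_reachable G (reach_rep G v)).symm

/-- potential: distance from the component representative -/
noncomputable def phi (v : Fin N) : ℕ := G.dist (rep G v) v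

lemma exists_bfs_parent {v : Fin N} (h : v ≠ rep G v) :
    ∃ w, G.Adj v w ∧ G.dist (rep G v) w + 1 = G.dist (rep G v) v ∧ rep G w = rep G v := by
  have hreach : G.Reachable (rep G v) v := (reach_rep G v).symm
  have hpos : 0 < G.dist (rep G v) v := hreach.pos_dist_of_ne (Ne.symm h)
  obtain ⟨p, hp⟩ := hreach.exists_walk_length_eq_dist
  set d := G.dist (rep G v) v with hd
  have hnn : ¬ p.reverse.Nil := SimpleGraph.Walk.not_nil_of_ne (Ne.symm h).symm
  obtain ⟨u, hadj, q, hq⟩ := SimpleGraph.Walk.not_nil_iff.1 hnn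
  have hlen : q.length + 1 = d := by
    have := congrArg SimpleGraph.Walk.length hq
    simp [hp] at this
    omega
  have h1 : G.dist (rep G v) u ≤ d - 1 := by
    have h2 := SimpleGraph.dist_le q.reverse
    simp only [SimpleGraph.Walk.length_reverse] at h2
    omega
  have h2 : d ≤ G.dist (rep G v) u + 1 := by
    have hru : G.Reachable (rep G v) u := q.reverse.reachable
    obtain ⟨w1, hw1⟩ := hru.exists_walk_length_eq_dist
    have := SimpleGraph.dist_le (w1.concat hadj.symm)
    rw [SimpleGraph.Walk.length_concat, hw1] at this
    exact this
  refine ⟨u, hadj, by omega, (rep_eq_of_reachable G hadj.reachable).symm⟩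

/-- BFS parent function: moves one step towards the component representative. -/
noncomputable def par (v : Fin N) : Fin N :=
  if h : v = rep G v then v else Classical.choose (exists_bfs_parent G h)

lemma par_root {v : Fin N} (h : v = rep G v) : par G v = v := dif_pos h

lemma par_spec {v : Fin N} (h : v ≠ rep G v) :
    G.Adj v (par G v) ∧ G.dist (rep G v) (par G v) + 1 = G.dist (rep G v) v ∧
      rep G (par G v) = rep G v := by
  have := Classical.choose_spec (exists_bfs_parent G h)
  rw [par, dif_neg h]
  exact this

lemma rep_par (v : Fin N) : rep G (par G v) = rep G v := by
  by_cases h : v = rep G v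
  · rw [par_root G h]
  · exact (par_spec G h).2.2

lemma phi_par_lt {v : Fin N} (h : v ≠ rep G v) : phi G (par G v) < phi G v := by
  have hs := par_spec G h
  have : phi G (par G v) = G.dist (rep G v) (par G v) := by
    unfold phi
    rw [hs.2.2]
  have h2 : phi G v = G.dist (rep G v) v := rfl
  omega

lemma par_ne_iff {v : Fin N} : par G v ≠ v ↔ v ≠ rep G v := by
  constructor
  · intro h hv
    exact h (par_root G hv)
  · intro h hp
    have := (par_spec G h).1
    rw [hp] at this
    exact G.irrefl this

lemma phi_par_lt' {v : Fin N} (h : par G v ≠ v) : phi G (par G v) < phi G v :=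
  phi_par_lt G ((par_ne_iff G).1 h)

lemma adj_par {v : Fin N} (h : par G v ≠ v) : G.Adj v (par G v) :=
  (par_spec G ((par_ne_iff G).1 h)).1

/-- ancestry relation: `v` is an iterated parent of `w`. -/
def Orb (v w : Fin N) : Prop := ∃ k, (par G)^[k] w = v

lemma orb_refl (v : Fin N) : Orb G v v := ⟨0, rfl⟩

lemma orb_of_orb_par {v w : Fin N} (h : Orb G v (par G w)) : Orb G v w := by
  obtain ⟨k, hk⟩ := h
  exact ⟨k + 1, by rw [Function.iterate_succ_apply]; exact hk⟩

lemma orb_par_of_orb {v w : Fin N} (h : Orb G v w) (hne : w ≠ v) : Orb G v (par G w) := by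
  obtain ⟨k, hk⟩ := h
  match k, hk with
  | 0, hk => exact absurd hk hne
  | k + 1, hk => exact ⟨k, by rw [Function.iterate_succ_apply] at hk; exact hk⟩

lemma rep_orb {v w : Fin N} (h : Orb G v w) : rep G v = rep G w := by
  obtain ⟨k, hk⟩ := h
  induction k generalizing w v with
  | zero => simp only [Function.iterate_zero_apply] at hk; rw [← hk]
  | succ k ih =>
    rw [Function.iterate_succ_apply] at hk
    rw [ih hk, rep_par]

lemma orb_root_eq {v w : Fin N} (h : Orb G v w) (hroot : par G w = w) : v = w := by
  obtain ⟨k, hk⟩ := h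
  have : (par G)^[k] w = w := Function.iterate_fixed hroot k
  rw [this] at hk
  exact hk.symm

/-- top ancestor of `v` before hitting the blocker set `B` (or the root). -/
noncomputable def anc (B : Finset (Fin N)) (v : Fin N) : Fin N :=
  if par G v = v ∨ par G v ∈ B then v else anc B (par G v)
termination_by phi G v
decreasing_by
  exact phi_par_lt' G (by tauto)

lemma anc_stop {B : Finset (Fin N)} {v : Fin N} (h : par G v = v ∨ par G v ∈ B) :
    anc G B v = v := by
  rw [anc, if_pos h]

lemma anc_go {B : Finset (Fin N)} {v : Fin N} (h : ¬(par G v = v ∨ par G v ∈ B)) :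
    anc G B v = anc G B (par G v) := by
  conv_lhs => rw [anc]
  rw [if_neg h]

lemma anc_orb (B : Finset (Fin N)) (v : Fin N) : Orb G (anc G B v) v := by
  by_cases h : par G v = v ∨ par G v ∈ B
  · rw [anc_stop G h]; exact orb_refl G v
  · rw [anc_go G h]
    exact orb_of_orb_par G (anc_orb B (par G v))
termination_by phi G v
decreasing_by
  exact phi_par_lt' G (by tauto)

lemma anc_not_mem (B : Finset (Fin N)) (v : Fin N) (hv : v ∉ B) : anc G B v ∉ B := by
  by_cases h : par G v = v ∨ par G v ∈ B
  · rw [anc_stop G h]; exact hv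
  · rw [anc_go G h]
    exact anc_not_mem B (par G v) (by tauto)
termination_by phi G v
decreasing_by
  exact phi_par_lt' G (by tauto)

lemma anc_mem_closed {B S : Finset (Fin N)} (hS : ∀ v ∈ S, par G v ∈ S)
    {v : Fin N} (hv : v ∈ S) : anc G B v ∈ S := by
  by_cases h : par G v = v ∨ par G v ∈ B
  · rw [anc_stop G h]; exact hv
  · rw [anc_go G h]
    exact anc_mem_closed hS (hS v hv)
termination_by phi G v
decreasing_by
  exact phi_par_lt' G (by tauto)

lemma anc_insert_of_not_orb {B : Finset (Fin N)} {x v : Fin N} (h : ¬ Orb G x v) :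
    anc G (insert x B) v = anc G B v := by
  have hpx : par G v ≠ x := by
    intro he
    exact h (orb_of_orb_par G (he ▸ orb_refl G x))
  by_cases hc : par G v = v ∨ par G v ∈ B
  · have hc' : par G v = v ∨ par G v ∈ insert x B := by
      rcases hc with hc | hc
      · exact Or.inl hc
      · exact Or.inr (Finset.mem_insert_of_mem hc)
    rw [anc_stop G hc', anc_stop G hc]
  · have hc2 : ¬(par G v = v ∨ par G v ∈ insert x B) := by
      simp only [Finset.mem_insert]
      tauto
    rw [anc_go G hc2, anc_go G hc]
    refine anc_insert_of_not_orb (fun horb => h (orb_of_orb_par G horb))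
termination_by phi G v
decreasing_by
  exact phi_par_lt' G (by tauto)

/-- `anc` only depends on the part of `B` inside the component of `v`. -/
lemma anc_congr {B B' : Finset (Fin N)} {v : Fin N}
    (h : ∀ x, rep G x = rep G v → (x ∈ B ↔ x ∈ B')) : anc G B v = anc G B' v := by
  have hrep : rep G (par G v) = rep G v := rep_par G v
  by_cases hc : par G v = v ∨ par G v ∈ B
  · have : par G v = v ∨ par G v ∈ B' := by
      rcases hc with hc | hc
      · exact Or.inl hc
      · exact Or.inr ((h _ hrep).1 hc)
    rw [anc_stop G hc, anc_stop G this]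
  · have hc2 : ¬(par G v = v ∨ par G v ∈ B') := by
      rintro (hc2 | hc2)
      · exact hc (Or.inl hc2)
      · exact hc (Or.inr ((h _ hrep).2 hc2))
    rw [anc_go G hc, anc_go G hc2]
    exact anc_congr (fun x hx => h x (hx.trans hrep))
termination_by phi G v
decreasing_by
  exact phi_par_lt' G (by tauto)

noncomputable instance : ∀ v w : Fin N, Decidable (Orb G v w) :=
  fun _ _ => Classical.propDecidable _

/-- if `v ∈ B` and no other element of `B` is a descendant of `v`, then the
top blocked ancestor of any proper descendant of `v` is a child of `v`. -/
lemma anc_child {B : Finset (Fin N)} {v : Fin N} (hvB : v ∈ B)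
    (hBD : ∀ x ∈ B, x ≠ v → ¬ Orb G v x) :
    ∀ w, Orb G v w → w ≠ v → w ∉ B → par G (anc G B w) = v := by
  intro w horb hne hwB
  have hpw : par G w ≠ w := by
    intro hroot
    exact hne (orb_root_eq G horb hroot).symm
  by_cases hpv : par G w = v
  · rw [anc_stop G (Or.inr (hpv ▸ hvB))]
    exact hpv
  · have hoP : Orb G v (par G w) := orb_par_of_orb G horb hne
    have hpB : par G w ∉ B := fun hmem => hBD _ hmem hpv hoP
    rw [anc_go G (by tauto)]
    exact anc_child hvB hBD (par G w) hoP hpv hpB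
termination_by w => phi G w
decreasing_by
  exact phi_par_lt' G (by tauto)

lemma sep (n : ℕ) (hn : 1 ≤ n) :
    ∀ (m : ℕ) (S : Finset (Fin N)), S.card ≤ m → (∀ v ∈ S, par G v ∈ S) →
    ∃ B : Finset (Fin N), B ⊆ S ∧ B.card * n ≤ S.card ∧
      ∀ t, ((S \ B).filter (fun w => anc G B w = t)).card ≤ n - 1 := by
  intro m
  induction m with
  | zero =>
    intro S hS hcl
    have : S = ∅ := Finset.card_eq_zero.1 (Nat.le_zero.1 hS)
    subst this
    exact ⟨∅, Finset.Subset.refl _, by simp, fun t => by simp⟩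
  | succ m ih =>
    intro S hS hcl
    set H := S.filter (fun v => n ≤ (S.filter (fun w => Orb G v w)).card) with hH
    rcases H.eq_empty_or_nonempty with hHe | hHne
    · -- base : no heavy vertex
      refine ⟨∅, Finset.empty_subset _, by simp, fun t => ?_⟩
      rcases ((S \ ∅).filter (fun w => anc G ∅ w = t)).eq_empty_or_nonempty with he | ⟨w, hw⟩
      · rw [he]; simp
      · simp only [Finset.sdiff_empty, Finset.mem_filter] at hw
        have htS : t ∈ S := hw.2 ▸ anc_mem_closed G hcl hw.1
        have htH : t ∉ H := hHe ▸ Finset.notMem_empty t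
        have hlt : (S.filter (fun w => Orb G t w)).card ≤ n - 1 := by
          rw [hH] at htH
          simp only [Finset.mem_filter] at htH
          push_neg at htH
          have := htH htS
          omega
        refine le_trans (Finset.card_le_card ?_) hlt
        intro w' hw'
        simp only [Finset.sdiff_empty, Finset.mem_filter] at hw' ⊢
        exact ⟨hw'.1, hw'.2 ▸ anc_orb G ∅ w'⟩
    · -- heavy vertex exists : recurse
      obtain ⟨v, hvH, hmax⟩ := H.exists_max_image (phi G) hHne
      have hvS : v ∈ S := (Finset.mem_filter.1 hvH).1
      have hvDn : n ≤ (S.filter (fun w => Orb G v w)).card := (Finset.mem_filter.1 hvH).2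
      set D := S.filter (fun w => Orb G v w) with hD
      have hDS : D ⊆ S := Finset.filter_subset _ _
      have hvD : v ∈ D := Finset.mem_filter.2 ⟨hvS, orb_refl G v⟩
      set S' := S \ D with hS'
      have hcl' : ∀ w ∈ S', par G w ∈ S' := by
        intro w hw
        simp only [hS', Finset.mem_sdiff] at hw ⊢
        refine ⟨hcl w hw.1, fun hmem => hw.2 ?_⟩
        simp only [hD, Finset.mem_filter] at hmem ⊢
        exact ⟨hw.1, orb_of_orb_par G hmem.2⟩
      have hcard' : S'.card ≤ m := by
        have h1 : S'.card = S.card - D.card := Finset.card_sdiff_of_subset hDS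
        omega
      obtain ⟨B', hB'sub, hB'card, hB'fib⟩ := ih S' hcard' hcl'
      have hvS' : v ∉ S' := by simp [hS', hvD]
      have hvB' : v ∉ B' := fun h => hvS' (hB'sub h)
      refine ⟨insert v B', ?_, ?_, ?_⟩
      · intro x hx
        rcases Finset.mem_insert.1 hx with rfl | hx
        · exact hvS
        · exact Finset.sdiff_subset (hB'sub hx)
      · rw [Finset.card_insert_of_notMem hvB']
        have h1 : S'.card = S.card - D.card := Finset.card_sdiff_of_subset hDS
        have h2 : D.card ≤ S.card := Finset.card_le_card hDS
        have h3 : (#B' + 1) * n = #B' * n + n := by ring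
        omega
      · -- fiber bound
        intro t
        set B := insert v B' with hB
        have hvB : v ∈ B := Finset.mem_insert_self v B'
        have hBD : ∀ x ∈ B, x ≠ v → ¬ Orb G v x := by
          intro x hx hxv horb
          rcases Finset.mem_insert.1 hx with rfl | hx
          · exact hxv rfl
          · have hxS' : x ∈ S' := hB'sub hx
            simp only [hS', Finset.mem_sdiff] at hxS'
            exact hxS'.2 (Finset.mem_filter.2 ⟨hxS'.1, horb⟩)
        have hnotOrb : ∀ w ∈ S, w ∉ D → ¬ Orb G v w := by
          intro w hwS hwD horb
          exact hwD (Finset.mem_filter.2 ⟨hwS, horb⟩)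
        rcases ((S \ B).filter (fun w => anc G B w = t)).eq_empty_or_nonempty with he | ⟨w, hw⟩
        · rw [he]; simp
        · simp only [Finset.mem_filter, Finset.mem_sdiff] at hw
          obtain ⟨⟨hwS, hwB⟩, hwanc⟩ := hw
          by_cases hwD : w ∈ D
          · -- t is a child of v, its descendant set is small by maximality
            have hwv : w ≠ v := by
              rintro rfl
              exact hwB hvB
            have hOvw : Orb G v w := (Finset.mem_filter.1 hwD).2
            have hpt : par G t = v := hwanc ▸ anc_child G hvB hBD w hOvw hwv hwB
            have htS : t ∈ S := hwanc ▸ anc_mem_closed G hcl hwS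
            have htB : t ∉ B := hwanc ▸ anc_not_mem G B w hwB
            have htv : t ≠ v := fun h => htB (h ▸ hvB)
            have hphi : phi G v < phi G t := by
              have : par G t ≠ t := fun h => htv (by rw [← hpt, h])
              have := phi_par_lt' G this
              rw [hpt] at this
              exact this
            have htH : t ∉ H := fun hmem => absurd (hmax t hmem) (by omega)
            have hlt : (S.filter (fun w => Orb G t w)).card ≤ n - 1 := by
              rw [hH] at htH
              simp only [Finset.mem_filter] at htH
              push_neg at htH
              have := htH htS
              omega
            refine le_trans (Finset.card_le_card ?_) hlt
            intro w' hw'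
            simp only [Finset.mem_filter, Finset.mem_sdiff] at hw'
            exact Finset.mem_filter.2 ⟨hw'.1.1, hw'.2 ▸ anc_orb G B w'⟩
          · -- w outside D : use induction fiber
            have hnOvw : ¬ Orb G v w := hnotOrb w hwS hwD
            have hanc' : anc G B w = anc G B' w := anc_insert_of_not_orb G hnOvw
            have hwS' : w ∈ S' := Finset.mem_sdiff.2 ⟨hwS, hwD⟩
            have htS' : t ∈ S' := by
              rw [← hwanc, hanc']
              exact anc_mem_closed G hcl' hwS'
            refine le_trans (Finset.card_le_card ?_) (hB'fib t)
            intro w' hw'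
            simp only [Finset.mem_filter, Finset.mem_sdiff] at hw' ⊢
            obtain ⟨⟨hw'S, hw'B⟩, hw'anc⟩ := hw'
            have hw'D : w' ∉ D := by
              intro hmem
              have hw'v : w' ≠ v := by
                rintro rfl
                exact hw'B hvB
              have hpt : par G t = v :=
                hw'anc ▸ anc_child G hvB hBD w' (Finset.mem_filter.1 hmem).2 hw'v hw'B
              have : par G t ∈ S' := hcl' t htS'
              rw [hpt] at this
              exact hvS' this
            have hw'B' : w' ∉ B' := fun h => hw'B (Finset.mem_insert_of_mem h)
            refine ⟨⟨Finset.mem_sdiff.2 ⟨hw'S, hw'D⟩, hw'B'⟩, ?_⟩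
            rw [← hw'anc, anc_insert_of_not_orb G (hnotOrb w' hw'S hw'D)]

/-- blocker/partition master inequality -/
lemma master {n : ℕ} (hn : 2 ≤ n) (hA : Arrows G (pathGraph n) 2)
    (B : Finset (Fin N)) (bl : Fin N → Fin N)
    (hfib : ∀ t, (Finset.univ.filter (fun v => v ∉ B ∧ bl v = t)).card ≤ n - 1) :
    n - 1 ≤ 2 * B.card +
      (G.edgeFinset.filter
        (fun e => ∃ x y, e = s(x, y) ∧ x ∉ B ∧ y ∉ B ∧ bl x ≠ bl y)).card := by
  classical
  set sameP : Sym2 (Fin N) → Prop :=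
    fun e => ∃ x y, e = s(x, y) ∧ x ∉ B ∧ y ∉ B ∧ bl x = bl y with hsameP
  set cut := G.edgeFinset.filter
    (fun e => ∃ x y, e = s(x, y) ∧ x ∉ B ∧ y ∉ B ∧ bl x ≠ bl y) with hcut
  obtain ⟨k, f, hinj, hadj⟩ := hA (fun e => if sameP e then 0 else 1)
  set g : ℕ → Fin N := fun i => if h : i < n then f ⟨i, h⟩ else f ⟨0, by omega⟩ with hg
  have hginj : ∀ i j, i < n → j < n → g i = g j → i = j := by
    intro i j hi hj hij
    simp only [hg, dif_pos hi, dif_pos hj] at hij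
    have := hinj hij
    simpa using congrArg Fin.val this
  have hstep : ∀ i, i + 1 < n → G.Adj (g i) (g (i + 1)) ∧
      (if sameP s(g i, g (i + 1)) then (0 : Fin 2) else 1) = k := by
    intro i hi
    have hpa : (pathGraph n).Adj ⟨i, by omega⟩ ⟨i + 1, hi⟩ := by
      rw [pathGraph_adj]
      left
      rfl
    have := hadj _ _ hpa
    simpa only [hg, dif_pos (show i < n by omega), dif_pos hi] using this
  have hk01 : k = 0 ∨ k = 1 := by omega
  rcases hk01 with hk | hk
  · -- monochromatic in colour 0 : the path lives in one fibre, contradiction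
    exfalso
    subst hk
    have hsame : ∀ i, i + 1 < n → sameP s(g i, g (i + 1)) := by
      intro i hi
      have h2 := (hstep i hi).2
      by_contra hcon
      rw [if_neg hcon] at h2
      exact absurd h2 (by decide)
    have hchain : ∀ i, i < n → g i ∉ B ∧ bl (g i) = bl (g 0) := by
      intro i
      induction i with
      | zero =>
        intro hi
        have h1 := hsame 0 (by omega)
        obtain ⟨x, y, hxy, hx, hy, hbl⟩ := h1
        rcases Sym2.eq_iff.1 hxy.symm with ⟨rfl, rfl⟩ | ⟨rfl, rfl⟩
        · exact ⟨hx, rfl⟩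
        · exact ⟨hy, rfl⟩
      | succ i ih =>
        intro hi
        have hprev := ih (by omega)
        obtain ⟨x, y, hxy, hx, hy, hbl⟩ := hsame i (by omega)
        rcases Sym2.eq_iff.1 hxy.symm with ⟨rfl, rfl⟩ | ⟨rfl, rfl⟩
        · exact ⟨hy, hbl ▸ hprev.2⟩
        · exact ⟨hx, (hbl.symm) ▸ hprev.2⟩
    have hmap : ∀ i : Fin n, g i.1 ∈
        Finset.univ.filter (fun v => v ∉ B ∧ bl v = bl (g 0)) := by
      intro i
      have := hchain i.1 i.2
      simp only [Finset.mem_filter, Finset.mem_univ, true_and]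
      exact this
    have hcard := Finset.card_le_card_of_injOn
      (s := (Finset.univ : Finset (Fin n))) (fun i : Fin n => g i.1)
      (fun i _ => hmap i) (fun i _ j _ hij => Fin.ext (hginj i.1 j.1 i.2 j.2 hij))
    simp only [Finset.card_univ, Fintype.card_fin] at hcard
    have := hfib (bl (g 0))
    omega
  · -- monochromatic in colour 1 : count edges
    subst hk
    have hnotsame : ∀ i, i + 1 < n → ¬ sameP s(g i, g (i + 1)) := by
      intro i hi
      have h2 := (hstep i hi).2
      intro hs
      rw [if_pos hs] at h2
      exact absurd h2 (by decide)
    set I := (Finset.range (n - 1)).filter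
      (fun i => g i ∈ B ∨ g (i + 1) ∈ B) with hI
    set J := (Finset.range (n - 1)).filter
      (fun i => ¬(g i ∈ B ∨ g (i + 1) ∈ B)) with hJ
    have hIJ : I.card + J.card = n - 1 := by
      rw [hI, hJ, Finset.card_filter_add_card_filter_not]
      · simp
    -- J maps injectively into the cut
    have hJcut : J.card ≤ cut.card := by
      refine Finset.card_le_card_of_injOn (fun i => s(g i, g (i + 1))) ?_ ?_
      · intro i hi
        simp only [hJ, Finset.mem_coe, Finset.mem_filter, Finset.mem_range] at hi
        push_neg at hi
        obtain ⟨hilt, hgi, hgi1⟩ := hi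
        have hilt' : i + 1 < n := by omega
        rw [hcut]
        simp only [Finset.mem_coe, Finset.mem_filter, SimpleGraph.mem_edgeFinset]
        refine ⟨(hstep i hilt').1, g i, g (i+1), rfl, hgi, hgi1, ?_⟩
        intro hbl
        exact hnotsame i hilt' ⟨g i, g (i+1), rfl, hgi, hgi1, hbl⟩
      · intro i hi j hj hij
        simp only [hJ, Finset.mem_coe, Finset.mem_filter, Finset.mem_range] at hi hj
        have hi1 : i < n - 1 := hi.1
        have hj1 : j < n - 1 := hj.1
        simp only at hij
        rcases Sym2.eq_iff.1 hij with ⟨h1, h2⟩ | ⟨h1, h2⟩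
        · exact hginj i j (by omega) (by omega) h1
        · have e1 := hginj i (j+1) (by omega) (by omega) h1
          have e2 := hginj (i+1) j (by omega) (by omega) h2
          omega
    -- I maps injectively into B × Fin 2
    have hIB : I.card ≤ 2 * B.card := by
      have hmain : I.card ≤ (B ×ˢ (Finset.univ : Finset (Fin 2))).card := by
        refine Finset.card_le_card_of_injOn
          (fun i => if g i ∈ B then (g i, 0) else (g (i + 1), 1)) ?_ ?_
        · intro i hi
          simp only [hI, Finset.mem_coe, Finset.mem_filter, Finset.mem_range] at hi
          dsimp only
          by_cases hc : g i ∈ B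
          · rw [if_pos hc]
            exact Finset.mem_product.2 ⟨hc, Finset.mem_univ _⟩
          · rw [if_neg hc]
            refine Finset.mem_product.2 ⟨?_, Finset.mem_univ _⟩
            tauto
        · intro i hi j hj hij
          simp only [hI, Finset.mem_coe, Finset.mem_filter, Finset.mem_range] at hi hj
          have hi1 : i < n - 1 := hi.1
          have hj1 : j < n - 1 := hj.1
          simp only at hij
          by_cases hci : g i ∈ B <;> by_cases hcj : g j ∈ B <;>
            simp only [hci, hcj, if_true, if_false, Prod.mk.injEq] at hij
          · exact hginj i j (by omega) (by omega) hij.1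
          · exact absurd hij.2 (by decide)
          · exact absurd hij.2 (by decide)
          · have := hginj (i+1) (j+1) (by omega) (by omega) hij.1
            omega
      have : (B ×ˢ (Finset.univ : Finset (Fin 2))).card = 2 * B.card := by
        rw [Finset.card_product]
        simp [Finset.card_univ]
        ring
      omega
    omega

/-- vertices of the component with representative `r` -/
noncomputable def compF (r : Fin N) : Finset (Fin N) :=
  Finset.univ.filter (fun v => rep G v = r)

lemma compF_closed (r : Fin N) : ∀ v ∈ compF G r, par G v ∈ compF G r := by
  intro v hv
  simp only [compF, Finset.mem_filter, Finset.mem_univ, true_and] at hv ⊢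
  rw [rep_par, hv]

lemma rep_self_of_mem {r v : Fin N} (hv : v ∈ compF G r) : rep G r = r := by
  simp only [compF, Finset.mem_filter] at hv
  rw [← hv.2, rep_rep]

lemma mem_compF_self {r : Fin N} (h : rep G r = r) : r ∈ compF G r := by
  simp only [compF, Finset.mem_filter, Finset.mem_univ, true_and]
  exact h

lemma mem_compF_iff {r v : Fin N} : v ∈ compF G r ↔ rep G v = r := by
  simp [compF]

lemma compF_disjoint {r r' : Fin N} (h : r ≠ r') :
    Disjoint (compF G r) (compF G r') := by
  rw [Finset.disjoint_left]
  intro v hv hv'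
  rw [mem_compF_iff] at hv hv'
  exact h (hv ▸ hv')

/-- tree edges of the component of `r` -/
noncomputable def treeE (r : Fin N) : Finset (Sym2 (Fin N)) :=
  ((compF G r).erase r).image (fun v => s(v, par G v))

lemma par_ne_of_mem_erase {r v : Fin N} (hv : v ∈ (compF G r).erase r) :
    par G v ≠ v := by
  rw [Finset.mem_erase, mem_compF_iff] at hv
  rw [par_ne_iff]
  rw [hv.2]
  exact hv.1

lemma treeE_card (r : Fin N) (hr : rep G r = r) :
    (treeE G r).card = (compF G r).card - 1 := by
  rw [treeE, Finset.card_image_of_injOn, Finset.card_erase_of_mem (mem_compF_self G hr)]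
  intro v hv w hw hvw
  have hv' := par_ne_of_mem_erase G (Finset.mem_coe.1 hv)
  have hw' := par_ne_of_mem_erase G (Finset.mem_coe.1 hw)
  rcases Sym2.eq_iff.1 hvw with ⟨h1, h2⟩ | ⟨h1, h2⟩
  · exact h1
  · exfalso
    have l1 := phi_par_lt' G hv'
    have l2 := phi_par_lt' G hw'
    rw [← h1] at l2
    rw [h2] at l1
    omega

lemma treeE_subset (r : Fin N) : treeE G r ⊆ G.edgeFinset := by
  intro e he
  rw [treeE, Finset.mem_image] at he
  obtain ⟨v, hv, rfl⟩ := he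
  rw [SimpleGraph.mem_edgeFinset, SimpleGraph.mem_edgeSet]
  exact adj_par G (par_ne_of_mem_erase G hv)

lemma treeE_rep {r : Fin N} {e : Sym2 (Fin N)} (he : e ∈ treeE G r) :
    ∀ x ∈ e, rep G x = r := by
  rw [treeE, Finset.mem_image] at he
  obtain ⟨v, hv, rfl⟩ := he
  rw [Finset.mem_erase, mem_compF_iff] at hv
  intro x hx
  rcases Sym2.mem_iff.1 hx with rfl | rfl
  · exact hv.2
  · rw [rep_par, hv.2]

lemma treeE_disjoint {r r' : Fin N} (h : r ≠ r') :
    Disjoint (treeE G r) (treeE G r') := by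
  rw [Finset.disjoint_left]
  intro e he he'
  have h1 := treeE_rep G he
  have h2 := treeE_rep G he'
  have hne : e.out.1 ∈ e := Sym2.out_fst_mem e
  exact h ((h1 _ hne).symm.trans (h2 _ hne))

lemma cut_rep_empty (B : Finset (Fin N)) :
    G.edgeFinset.filter
      (fun e => ∃ x y, e = s(x, y) ∧ x ∉ B ∧ y ∉ B ∧ rep G x ≠ rep G y) = ∅ := by
  rw [Finset.filter_eq_empty_iff]
  rintro e he ⟨x, y, rfl, -, -, hne⟩
  rw [SimpleGraph.mem_edgeFinset, SimpleGraph.mem_edgeSet] at he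
  exact hne (rep_eq_of_reachable G he.reachable)

/-- The main quantitative lower bound. -/
lemma lower_bound {n : ℕ} (hn : 30 ≤ n) (hA : Arrows G (pathGraph n) 2) :
    5 * n ≤ 2 * G.edgeFinset.card + 15 := by
  classical
  set m := G.edgeFinset.card with hm
  by_cases hm5 : 5 * n ≤ 2 * m + 15
  · exact hm5
  push_neg at hm5
  exfalso
  set bigs := Finset.univ.filter
    (fun r : Fin N => rep G r = r ∧ n ≤ (compF G r).card) with hbigs
  have hbig_card : ∀ r ∈ bigs, n ≤ (compF G r).card := by
    intro r hr
    exact ((Finset.mem_filter.1 hr).2).2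
  have hbig_rep : ∀ r ∈ bigs, rep G r = r := by
    intro r hr
    exact ((Finset.mem_filter.1 hr).2).1
  have hsmall : ∀ t : Fin N, rep G t = t → t ∉ bigs → (compF G t).card ≤ n - 1 := by
    intro t ht htb
    simp only [hbigs, Finset.mem_filter, Finset.mem_univ, true_and] at htb
    push_neg at htb
    have := htb ht
    omega
  have hfib_small : ∀ t : Fin N, t ∉ bigs →
      (Finset.univ.filter (fun v => rep G v = t)).card ≤ n - 1 := by
    intro t htb
    rcases (Finset.univ.filter (fun v : Fin N => rep G v = t)).eq_empty_or_nonempty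
      with he | ⟨v, hv⟩
    · rw [he]; simp
    · simp only [Finset.mem_filter] at hv
      have hrt : rep G t = t := by rw [← hv.2, rep_rep]
      have := hsmall t hrt htb
      calc (Finset.univ.filter (fun v => rep G v = t)).card
          = (compF G t).card := rfl
        _ ≤ n - 1 := this
  -- k ≥ 1 : there is a big component
  have hbigs_ne : bigs.Nonempty := by
    rw [Finset.nonempty_iff_ne_empty]
    intro hemp
    have hmast := master G (by omega) hA ∅ (rep G) ?_
    · rw [cut_rep_empty] at hmast
      simp at hmast
      omega
    · intro t
      have h1 : t ∉ bigs := by rw [hemp]; exact Finset.notMem_empty t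
      refine le_trans (Finset.card_le_card ?_) (hfib_small t h1)
      intro v hv
      simp only [Finset.mem_filter, Finset.mem_univ, true_and] at hv ⊢
      exact hv.2
  set k := bigs.card with hk
  set SC := bigs.sum (fun r => (compF G r).card) with hSC
  set Sb := bigs.sum (fun r => (compF G r).card - (n - 1)) with hSb
  have hSCsplit : SC = Sb + k * (n - 1) := by
    have hsplit : ∀ r ∈ bigs, (compF G r).card = ((compF G r).card - (n - 1)) + (n - 1) := by
      intro r hr
      have := hbig_card r hr
      omega
    calc SC = bigs.sum (fun r => ((compF G r).card - (n - 1)) + (n - 1)) :=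
          Finset.sum_congr rfl hsplit
      _ = Sb + k * (n - 1) := by
          rw [Finset.sum_add_distrib, Finset.sum_const, smul_eq_mul]
  have hk1 : 1 ≤ k := Finset.card_pos.2 hbigs_ne
  have hkSC : k * n ≤ SC := by
    have := Finset.card_nsmul_le_sum bigs (fun r => (compF G r).card) n hbig_card
    simpa [smul_eq_mul] using this
  -- tree edges
  set T := bigs.biUnion (treeE G) with hT
  have hTdisj : ∀ r ∈ bigs, ∀ r' ∈ bigs, r ≠ r' → Disjoint (treeE G r) (treeE G r') :=
    fun r _ r' _ h => treeE_disjoint G h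
  have hTcard : T.card + k = SC := by
    rw [hT, Finset.card_biUnion hTdisj]
    have h1 : ∀ r ∈ bigs, (treeE G r).card = (compF G r).card - 1 := by
      intro r hr
      exact treeE_card G r (hbig_rep r hr)
    rw [Finset.sum_congr rfl h1]
    have h3 : ∀ r ∈ bigs, ((compF G r).card - 1) + 1 = (compF G r).card := by
      intro r hr
      have := hbig_card r hr
      omega
    have h2 : (∑ r ∈ bigs, ((compF G r).card - 1)) + bigs.card
        = ∑ r ∈ bigs, (((compF G r).card - 1) + 1) := by
      rw [Finset.sum_add_distrib, Finset.sum_const, smul_eq_mul, mul_one]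
    rw [hk, h2, hSC]
    exact Finset.sum_congr rfl h3
  have hTsub : T ⊆ G.edgeFinset := by
    rw [hT]
    intro e he
    obtain ⟨r, _, hr⟩ := Finset.mem_biUnion.1 he
    exact treeE_subset G r hr
  have hTm : T.card ≤ m := Finset.card_le_card hTsub
  have hk2 : k ≤ 2 := by
    by_contra hk3
    push_neg at hk3
    have h1 : 3 * (n - 1) ≤ k * (n - 1) := Nat.mul_le_mul_right _ (by omega)
    have h2 : k * (n - 1) + k = k * n := by
      have h9 : n = (n - 1) + 1 := by omega
      nth_rewrite 2 [h9]
      rw [Nat.mul_add, Nat.mul_one]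
    omega
  -- S1 bound
  have hS1 : n - 1 ≤ 2 * Sb := by
    have hchoose : ∀ r ∈ bigs, ∃ Bs : Finset (Fin N),
        Bs ⊆ compF G r ∧ Bs.card = (compF G r).card - (n - 1) := by
      intro r hr
      exact Finset.exists_subset_card_eq (Nat.sub_le _ _)
    choose! Bs hBs1 hBs2 using hchoose
    set B1 := bigs.biUnion Bs with hB1
    have hB1disj : ∀ r ∈ bigs, ∀ r' ∈ bigs, r ≠ r' → Disjoint (Bs r) (Bs r') := by
      intro r hr r' hr' hne
      exact Finset.disjoint_of_subset_left (hBs1 r hr)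
        (Finset.disjoint_of_subset_right (hBs1 r' hr') (compF_disjoint G hne))
    have hB1card : B1.card = Sb := by
      rw [hB1, Finset.card_biUnion hB1disj, hSb]
      exact Finset.sum_congr rfl hBs2
    have hmast := master G (by omega) hA B1 (rep G) ?_
    · rw [cut_rep_empty] at hmast
      simp only [Finset.card_empty, add_zero] at hmast
      omega
    · intro t
      by_cases htb : t ∈ bigs
      · have hsub : Finset.univ.filter (fun v => v ∉ B1 ∧ rep G v = t) ⊆
            compF G t \ Bs t := by
          intro v hv
          simp only [Finset.mem_filter, Finset.mem_univ, true_and] at hv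
          rw [Finset.mem_sdiff, mem_compF_iff]
          refine ⟨hv.2, fun hmem => hv.1 ?_⟩
          rw [hB1]
          exact Finset.mem_biUnion.2 ⟨t, htb, hmem⟩
        refine le_trans (Finset.card_le_card hsub) ?_
        rw [Finset.card_sdiff_of_subset (hBs1 t htb), hBs2 t htb]
        have := hbig_card t htb
        omega
      · refine le_trans (Finset.card_le_card ?_) (hfib_small t htb)
        intro v hv
        simp only [Finset.mem_filter, Finset.mem_univ, true_and] at hv ⊢
        exact hv.2
  -- carve bound
  have hsep : ∀ r ∈ bigs, ∃ B : Finset (Fin N), B ⊆ compF G r ∧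
      B.card * n ≤ (compF G r).card ∧
      ∀ t, (((compF G r) \ B).filter (fun w => anc G B w = t)).card ≤ n - 1 := by
    intro r hr
    exact sep G n (by omega) (compF G r).card (compF G r) le_rfl (compF_closed G r)
  choose! Bc hBc1 hBc2 hBc3 using hsep
  set Bg := bigs.biUnion Bc with hBg
  set blc : Fin N → Fin N :=
    fun v => if rep G v ∈ bigs then anc G (Bc (rep G v)) v else rep G v with hblc
  have hBgsub : ∀ r ∈ bigs, Bc r ⊆ Bg := by
    intro r hr x hx
    rw [hBg]
    exact Finset.mem_biUnion.2 ⟨r, hr, hx⟩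
  have hBg2 : Bg.card ≤ 2 := by
    by_contra hc
    push_neg at hc
    have h1 : Bg.card ≤ bigs.sum (fun r => (Bc r).card) := Finset.card_biUnion_le
    have h2 : (bigs.sum (fun r => (Bc r).card)) * n ≤ SC := by
      rw [Finset.sum_mul, hSC]
      exact Finset.sum_le_sum (fun r hr => hBc2 r hr)
    have h3 : 3 * n ≤ Bg.card * n := Nat.mul_le_mul_right _ (by omega)
    have h4 : Bg.card * n ≤ (bigs.sum (fun r => (Bc r).card)) * n :=
      Nat.mul_le_mul_right _ h1
    omega
  -- fibre bound for the carve colouring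
  have hfib2 : ∀ t, (Finset.univ.filter (fun v => v ∉ Bg ∧ blc v = t)).card ≤ n - 1 := by
    intro t
    have hrepel : ∀ v, v ∉ Bg → blc v = t → rep G v = rep G t := by
      intro v hv hb
      rw [hblc] at hb
      simp only at hb
      by_cases hvb : rep G v ∈ bigs
      · rw [if_pos hvb] at hb
        have horb : Orb G t v := hb ▸ anc_orb G _ v
        exact (rep_orb G horb).symm
      · rw [if_neg hvb] at hb
        rw [← hb, rep_rep]
    by_cases hrt : rep G t ∈ bigs
    · have hsub : Finset.univ.filter (fun v => v ∉ Bg ∧ blc v = t) ⊆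
          ((compF G (rep G t)) \ Bc (rep G t)).filter
            (fun w => anc G (Bc (rep G t)) w = t) := by
        intro v hv
        simp only [Finset.mem_filter, Finset.mem_univ, true_and] at hv
        obtain ⟨hv1, hv2⟩ := hv
        have hre := hrepel v hv1 hv2
        rw [Finset.mem_filter, Finset.mem_sdiff, mem_compF_iff]
        refine ⟨⟨hre, fun hmem => hv1 (hBgsub _ hrt hmem)⟩, ?_⟩
        rw [hblc] at hv2
        simp only at hv2
        rw [if_pos (hre ▸ hrt), hre] at hv2
        exact hv2
      exact le_trans (Finset.card_le_card hsub) (hBc3 (rep G t) hrt t)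
    · have htb : t ∉ bigs := by
        intro hmem
        rw [hbig_rep t hmem] at hrt
        exact hrt hmem
      refine le_trans (Finset.card_le_card ?_) (hfib_small t htb)
      intro v hv
      simp only [Finset.mem_filter, Finset.mem_univ, true_and] at hv ⊢
      obtain ⟨hv1, hv2⟩ := hv
      have hre := hrepel v hv1 hv2
      rw [hblc] at hv2
      simp only at hv2
      rw [if_neg (fun hc => hrt (hre ▸ hc))] at hv2
      exact hv2
  have hmast := master G (by omega) hA Bg blc hfib2
  set cutC := G.edgeFinset.filter
    (fun e => ∃ x y, e = s(x, y) ∧ x ∉ Bg ∧ y ∉ Bg ∧ blc x ≠ blc y) with hcutC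
  -- tree edges are not cut edges
  have hdisjTC : Disjoint T cutC := by
    rw [Finset.disjoint_left]
    intro e heT heC
    obtain ⟨r, hrb, hre⟩ := Finset.mem_biUnion.1 heT
    rw [treeE, Finset.mem_image] at hre
    obtain ⟨v, hv, rfl⟩ := hre
    have hrv : rep G v = r := by
      have := (Finset.mem_erase.1 hv).2
      exact (mem_compF_iff G).1 this
    have hrpv : rep G (par G v) = r := by rw [rep_par, hrv]
    have hpne : par G v ≠ v := par_ne_of_mem_erase G hv
    rw [hcutC, Finset.mem_filter] at heC
    obtain ⟨-, x, y, hexy, hx, hy, hne⟩ := heC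
    have hblve : blc v = blc (par G v) := by
      rw [hblc]
      simp only
      rw [hrv, hrpv, if_pos hrb, if_pos hrb]
      have hpvB : par G v ∉ Bc r := by
        rcases Sym2.eq_iff.1 hexy with ⟨h1, h2⟩ | ⟨h1, h2⟩
        · exact fun hmem => hy (h2 ▸ hBgsub r hrb hmem)
        · exact fun hmem => hx (h2 ▸ hBgsub r hrb hmem)
      exact anc_go G (by tauto)
    rcases Sym2.eq_iff.1 hexy with ⟨h1, h2⟩ | ⟨h1, h2⟩
    · exact hne (h1 ▸ h2 ▸ hblve)
    · exact hne (h1 ▸ h2 ▸ hblve.symm)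
  have hcutsub : cutC ⊆ G.edgeFinset := Finset.filter_subset _ _
  have hfinal : T.card + cutC.card ≤ m := by
    rw [← Finset.card_union_of_disjoint hdisjTC]
    exact Finset.card_le_card (Finset.union_subset hTsub hcutsub)
  -- final arithmetic
  have hx1 : k * (n - 1) = k * (n - 2) + k := by
    have h9 : n - 1 = (n - 2) + 1 := by omega
    rw [h9, Nat.mul_add, Nat.mul_one]
  have hx2 : n - 2 ≤ k * (n - 2) := Nat.le_mul_of_pos_left (n - 2) hk1
  omega

end SRLB


/-- There is `c > 0` such that `R̂(Pₙ, 2) ≥ 5n/2 − c` for every `n ≥ 1`. -/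
theorem sizeRamsey_path_two_lower :
    ∃ c : ℝ, 0 < c ∧ ∀ n : ℕ, 1 ≤ n →
      5 * (n : ℝ) / 2 - c ≤ (sizeRamsey (pathGraph n) 2 : ℝ) := by
  classical
  refine ⟨100, by norm_num, ?_⟩
  intro n hn
  by_cases hn30 : n < 30
  · have h1 : 5 * (n : ℝ) / 2 - 100 ≤ 0 := by
      have h2 : (n : ℝ) ≤ 29 := by exact_mod_cast Nat.lt_succ_iff.1 hn30
      nlinarith
    have h3 : (0 : ℝ) ≤ (sizeRamsey (pathGraph n) 2 : ℝ) := Nat.cast_nonneg _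
    linarith
  · push_neg at hn30
    have hne : {m | ∃ (N : ℕ) (G : SimpleGraph (Fin N)),
        G.edgeSet.ncard = m ∧ Arrows G (pathGraph n) 2}.Nonempty :=
      ⟨(⊤ : SimpleGraph (Fin (2 * n))).edgeSet.ncard, 2 * n, ⊤, rfl, top_arrows_path n⟩
    have hmem := Nat.sInf_mem hne
    obtain ⟨N, G, hcard, hAG⟩ := hmem
    have hlb := SRLB.lower_bound G hn30 hAG
    have hedge : G.edgeSet.ncard = G.edgeFinset.card := by
      rw [← SimpleGraph.coe_edgeFinset, Set.ncard_coe_finset]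
    rw [hedge] at hcard
    unfold sizeRamsey
    rw [← hcard]
    have : (5 * n : ℝ) ≤ 2 * (G.edgeFinset.card : ℝ) + 15 := by exact_mod_cast hlb
    linarith
end
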